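/- arXiv:2107.09167 — 7 statements merged into one kernel-verified Lean document; each statement's English description precedes it below -/
import Mathlib

section
/- If 0 < pA < 1, then for any fixed supplier index n the probability that the failure of that supplier causes a system failure, namely P(S | A_n) - P(S | A_nᶜ), equals r^PL·(1-pA)^{a-1}, i.e. (1-((1-pP)+pP·(1-pL)^c)^b)·(1-pA)^{a-1}. (Paper equation (7)/(A12): Birnbaum importance of an API supplier.) -/
open MeasureTheory ProbabilityTheory MeasurableSpace

lemma my_toReal_compl {Ω} [MeasurableSpace Ω] (μ : Measure Ω) [IsProbabilityMeasure μ]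
    {s : Set Ω} (hs : MeasurableSet s) : (μ sᶜ).toReal = 1 - (μ s).toReal := by
  rw [measure_compl hs (measure_ne_top μ s), measure_univ,
    ENNReal.toReal_sub_of_le prob_le_one ENNReal.one_ne_top, ENNReal.toReal_one]

lemma my_grouping {Ω ι κ : Type*} [DecidableEq ι] [MeasurableSpace Ω] {μ : Measure Ω}
    {f : ι → Set Ω} (hf : ∀ i, MeasurableSet (f i)) (hindep : iIndepSet f μ)
    (T : κ → Set ι) (hT : Pairwise (Function.onFun Disjoint T)) :
    iIndep (fun j => MeasurableSpace.generateFrom {t | ∃ i ∈ T j, f i = t}) μ := by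
  refine iIndepSets.iIndep (fun j => MeasurableSpace.generateFrom_le ?_)
    (fun j => piiUnionInter (fun i => {f i}) (T j))
    (fun j => isPiSystem_piiUnionInter _ (fun i => IsPiSystem.singleton _) _)
    (fun j => ?_) ?_
  · rintro t ⟨i, _, rfl⟩; exact hf i
  · rw [generateFrom_piiUnionInter_singleton_left]
  · rw [iIndepSets_iff]
    intro s g hg
    have key : ∀ j ∈ s, ∃ p : Finset ι, ↑p ⊆ T j ∧ g j = ⋂ i ∈ p, f i := by
      intro j hj
      obtain ⟨p, hp, u, hu, heq⟩ := hg j hj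
      exact ⟨p, hp, heq.trans (Set.iInter₂_congr fun x hx => hu x hx)⟩
    choose! p hp hgp using key
    have hdisj : Set.PairwiseDisjoint (↑s : Set κ) p := by
      intro j hj j' hj' hne
      exact Finset.disjoint_coe.mp ((hT hne).mono (hp j hj) (hp j' hj'))
    calc μ (⋂ j ∈ s, g j) = μ (⋂ i ∈ s.biUnion p, f i) := by
          rw [Finset.set_biInter_biUnion]; exact congrArg μ (Set.iInter₂_congr hgp)
      _ = ∏ i ∈ s.biUnion p, μ (f i) := hindep.meas_biInter _
      _ = ∏ j ∈ s, ∏ i ∈ p j, μ (f i) := Finset.prod_biUnion hdisj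
      _ = ∏ j ∈ s, μ (g j) := Finset.prod_congr rfl fun j hj => by
            rw [hgp j hj, hindep.meas_biInter]

theorem stmt_4
    {Ω : Type*} [MeasurableSpace Ω] (μ : Measure Ω) [IsProbabilityMeasure μ]
    (pA pP pL : ℝ)
    (hpA0 : 0 ≤ pA) (hpA1 : pA ≤ 1) (hpP0 : 0 ≤ pP) (hpP1 : pP ≤ 1)
    (hpL0 : 0 ≤ pL) (hpL1 : pL ≤ 1)
    (a b c : ℕ) (ha : 0 < a) (hb : 0 < b) (hc : 0 < c)
    (A : Fin a → Set Ω) (P : Fin b → Set Ω) (L : Fin b → Fin c → Set Ω)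
    (hmA : ∀ i, MeasurableSet (A i)) (hmP : ∀ j, MeasurableSet (P j))
    (hmL : ∀ j k, MeasurableSet (L j k))
    (hindep : iIndepSet
      (Sum.elim A (Sum.elim P (fun jk : Fin b × Fin c => L jk.1 jk.2))) μ)
    (hPA : ∀ i, (μ (A i)).toReal = pA)
    (hPP : ∀ j, (μ (P j)).toReal = pP)
    (hPL : ∀ j k, (μ (L j k)).toReal = pL)
    (hpApos : 0 < pA) (hpAlt : pA < 1) (n : Fin a) :
    (μ[|A n] ((⋃ i, A i) ∩ ⋃ j, P j ∩ ⋃ k, L j k)).toReal - (μ[|(A n)ᶜ] ((⋃ i, A i) ∩ ⋃ j, P j ∩ ⋃ k, L j k)).toReal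
        = (1 - ((1 - pP) + pP * (1 - pL) ^ c) ^ b) * (1 - pA) ^ (a - 1) := by
  classical
  set ι := Fin a ⊕ (Fin b ⊕ Fin b × Fin c) with hι
  set f : ι → Set Ω := Sum.elim A (Sum.elim P (fun jk : Fin b × Fin c => L jk.1 jk.2)) with hfdef
  have hmf : ∀ i, MeasurableSet (f i) := by
    rintro (i | j | jk)
    · exact hmA i
    · exact hmP j
    · exact hmL _ _
  have hiI : iIndep (fun i => MeasurableSpace.generateFrom {f i}) μ :=
    (iIndepSet_iff_iIndep f μ).1 hindep
  have hgen : ∀ i : ι, MeasurableSet[MeasurableSpace.generateFrom {f i}] (f i) :=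
    fun i => measurableSet_generateFrom rfl
  set V : Set Ω := ⋃ j, P j ∩ ⋃ k, L j k with hVdef
  have hVm : MeasurableSet V :=
    MeasurableSet.iUnion fun j => (hmP j).inter (MeasurableSet.iUnion fun k => hmL j k)
  set W : Set Ω := ⋃ i, ⋃ (_ : i ≠ n), A i with hWdef
  have hWm : MeasurableSet W :=
    MeasurableSet.iUnion fun i => MeasurableSet.iUnion fun _ => hmA i
  -- Numeric values
  have posA : μ (A n) ≠ 0 := by
    intro h; rw [← hPA n, h] at hpApos; simp at hpApos
  have posAc : μ (A n)ᶜ ≠ 0 := by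
    intro h
    have := my_toReal_compl μ (hmA n)
    rw [h, hPA n] at this
    simp at this; linarith
  -- union measure over L's
  have hprodL : ∀ j, (μ (⋂ k, (L j k)ᶜ)).toReal = (1 - pL) ^ c := by
    intro j
    have hinj : Function.Injective (fun k : Fin c => (Sum.inr (Sum.inr (j, k)) : ι)) := by
      intro x y h; simpa using h
    have h := hiI.meas_biInter
      (S := Finset.univ.image (fun k : Fin c => (Sum.inr (Sum.inr (j, k)) : ι)))
      (s := fun i => (f i)ᶜ) (fun i _ => (hgen i).compl)
    rw [Finset.set_biInter_finset_image, Finset.prod_image (fun x _ y _ hxy => hinj hxy)] at h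
    have e : (⋂ k ∈ (Finset.univ : Finset (Fin c)), (f (Sum.inr (Sum.inr (j, k))))ᶜ)
        = ⋂ k, (L j k)ᶜ := by
      simp [hfdef]
    rw [e] at h
    rw [h, ENNReal.toReal_prod]
    have e2 : ∀ k : Fin c, (μ ((f (Sum.inr (Sum.inr (j, k)) : ι))ᶜ)).toReal = 1 - pL := fun k => by
      have : f (Sum.inr (Sum.inr (j, k)) : ι) = L j k := rfl
      rw [this, my_toReal_compl μ (hmL j k), hPL]
    rw [Finset.prod_congr rfl (fun k _ => e2 k), Finset.prod_const, Finset.card_univ,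
      Fintype.card_fin]
  have hLL : ∀ j, (μ (⋃ k, L j k)).toReal = 1 - (1 - pL) ^ c := by
    intro j
    have e : (⋃ k, L j k) = (⋂ k, (L j k)ᶜ)ᶜ := by simp
    rw [e, my_toReal_compl μ (MeasurableSet.iInter fun k => (hmL j k).compl), hprodL]
  -- per-plant product
  have hPjL : ∀ j, μ (P j ∩ ⋃ k, L j k) = μ (P j) * μ (⋃ k, L j k) := by
    intro j
    have hdisj : Disjoint ({(Sum.inr (Sum.inl j) : ι)} : Set ι)
        (Set.range (fun k : Fin c => (Sum.inr (Sum.inr (j, k)) : ι))) := by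
      simp [Set.disjoint_left]
    have hind := iIndepSet.indep_generateFrom_of_disjoint hmf hindep _ _ hdisj
    refine (Indep_iff _ _ _).1 hind _ _ ?_ ?_
    · exact measurableSet_generateFrom ⟨Sum.inr (Sum.inl j), rfl, rfl⟩
    · exact MeasurableSet.iUnion fun k =>
        measurableSet_generateFrom ⟨Sum.inr (Sum.inr (j, k)), ⟨k, rfl⟩, rfl⟩
  have hQ : ∀ j, (μ ((P j ∩ ⋃ k, L j k)ᶜ)).toReal = (1 - pP) + pP * (1 - pL) ^ c := by
    intro j
    rw [my_toReal_compl μ ((hmP j).inter (MeasurableSet.iUnion fun k => hmL j k)),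
      hPjL, ENNReal.toReal_mul, hPP, hLL]
    ring
  -- value of V
  have hVval : (μ V).toReal = 1 - ((1 - pP) + pP * (1 - pL) ^ c) ^ b := by
    have hT : Pairwise (Function.onFun Disjoint (fun j : Fin b =>
        Set.range (fun o : Option (Fin c) =>
          (Option.elim o (Sum.inr (Sum.inl j)) (fun k => Sum.inr (Sum.inr (j, k))) : ι)))) := by
      intro j j' hjj'
      rw [Function.onFun, Set.disjoint_left]
      rintro x ⟨o, rfl⟩ ⟨o', h⟩
      cases o <;> cases o'
      · exact hjj' (Sum.inl_injective (Sum.inr_injective h)).symm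
      · exact (Sum.inr_ne_inl (Sum.inr_injective h)).elim
      · exact (Sum.inl_ne_inr (Sum.inr_injective h)).elim
      · exact hjj'
          (congrArg Prod.fst (Sum.inr_injective (Sum.inr_injective h))).symm
    have hgrp := my_grouping hmf hindep _ hT
    have h := hgrp.meas_iInter (s := fun j => (P j ∩ ⋃ k, L j k)ᶜ) (fun j => by
      refine MeasurableSet.compl ?_
      refine MeasurableSet.inter ?_ (MeasurableSet.iUnion fun k => ?_)
      · exact measurableSet_generateFrom ⟨Sum.inr (Sum.inl j), ⟨none, rfl⟩, rfl⟩
      · exact measurableSet_generateFrom ⟨Sum.inr (Sum.inr (j, k)), ⟨some k, rfl⟩, rfl⟩)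
    have e : (⋂ j, (P j ∩ ⋃ k, L j k)ᶜ) = Vᶜ := by
      rw [hVdef, Set.compl_iUnion]
    rw [e] at h
    have e2 : (μ V).toReal = 1 - (μ Vᶜ).toReal := by
      have := my_toReal_compl μ hVm.compl
      rw [compl_compl] at this; linarith
    rw [e2, h, ENNReal.toReal_prod, Finset.prod_congr rfl (fun j _ => hQ j),
      Finset.prod_const, Finset.card_univ, Fintype.card_fin]
  -- value of W
  have hWval : (μ W).toReal = 1 - (1 - pA) ^ (a - 1) := by
    have h := hiI.meas_biInter
      (S := (Finset.univ.erase n).image (Sum.inl : Fin a → ι))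
      (s := fun i => (f i)ᶜ) (fun i _ => (hgen i).compl)
    rw [Finset.set_biInter_finset_image,
      Finset.prod_image (fun x _ y _ hxy => Sum.inl_injective hxy)] at h
    have e : (⋂ i ∈ Finset.univ.erase n, (f (Sum.inl i : ι))ᶜ) = Wᶜ := by
      rw [hWdef, Set.compl_iUnion]
      ext x
      simp [hfdef, Finset.mem_erase]
    rw [e] at h
    have e2 : (μ W).toReal = 1 - (μ Wᶜ).toReal := by
      have := my_toReal_compl μ hWm.compl
      rw [compl_compl] at this; linarith
    have e3 : ∀ i : Fin a, (μ ((f (Sum.inl i : ι))ᶜ)).toReal = 1 - pA := fun i => by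
      have : f (Sum.inl i : ι) = A i := rfl
      rw [this, my_toReal_compl μ (hmA i), hPA]
    rw [e2, h, ENNReal.toReal_prod, Finset.prod_congr rfl (fun i _ => e3 i),
      Finset.prod_const, Finset.card_erase_of_mem (Finset.mem_univ n),
      Finset.card_univ, Fintype.card_fin]
  -- independence products
  have hVgen : MeasurableSet[MeasurableSpace.generateFrom
      {t | ∃ i ∈ Set.range (Sum.inr : Fin b ⊕ Fin b × Fin c → ι), f i = t}] V := by
    refine MeasurableSet.iUnion fun j => MeasurableSet.inter ?_
      (MeasurableSet.iUnion fun k => ?_)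
    · exact measurableSet_generateFrom ⟨Sum.inr (Sum.inl j), ⟨Sum.inl j, rfl⟩, rfl⟩
    · exact measurableSet_generateFrom ⟨Sum.inr (Sum.inr (j, k)), ⟨Sum.inr (j, k), rfl⟩, rfl⟩
  have hAnV : μ (A n ∩ V) = μ (A n) * μ V := by
    have hdisj : Disjoint ({(Sum.inl n : ι)} : Set ι)
        (Set.range (Sum.inr : Fin b ⊕ Fin b × Fin c → ι)) := by
      simp [Set.disjoint_left]
    have hind := iIndepSet.indep_generateFrom_of_disjoint hmf hindep _ _ hdisj
    refine (Indep_iff _ _ _).1 hind _ _ ?_ hVgen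
    exact measurableSet_generateFrom ⟨Sum.inl n, rfl, rfl⟩
  have hAcW : μ ((A n)ᶜ ∩ W) = μ (A n)ᶜ * μ W := by
    have hdisj : Disjoint ({(Sum.inl n : ι)} : Set ι)
        ((Sum.inl : Fin a → ι) '' {i | i ≠ n}) := by
      rw [Set.disjoint_left]
      rintro x rfl ⟨i, hi, h⟩
      exact hi (Sum.inl_injective h.symm).symm
    have hind := iIndepSet.indep_generateFrom_of_disjoint hmf hindep _ _ hdisj
    refine (Indep_iff _ _ _).1 hind ((A n)ᶜ) W ?_ ?_
    · refine MeasurableSet.compl (measurableSet_generateFrom ?_)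
      exact ⟨Sum.inl n, rfl, rfl⟩
    · exact MeasurableSet.iUnion fun i => MeasurableSet.iUnion fun hin =>
        measurableSet_generateFrom ⟨Sum.inl i, ⟨i, hin, rfl⟩, rfl⟩
  have hAcWV : μ ((A n)ᶜ ∩ (W ∩ V)) = μ (A n)ᶜ * (μ W * μ V) := by
    have hdisj : Disjoint (Set.range (Sum.inl : Fin a → ι))
        (Set.range (Sum.inr : Fin b ⊕ Fin b × Fin c → ι)) := by
      simp [Set.disjoint_left]
    have hind := iIndepSet.indep_generateFrom_of_disjoint hmf hindep _ _ hdisj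
    have hWgen : MeasurableSet[MeasurableSpace.generateFrom
        {t | ∃ i ∈ Set.range (Sum.inl : Fin a → ι), f i = t}] ((A n)ᶜ ∩ W) := by
      refine MeasurableSet.inter ?_ ?_
      · refine MeasurableSet.compl (measurableSet_generateFrom ?_)
        exact ⟨Sum.inl n, ⟨n, rfl⟩, rfl⟩
      · refine MeasurableSet.iUnion fun i => MeasurableSet.iUnion fun hin =>
          measurableSet_generateFrom ?_
        exact ⟨Sum.inl i, ⟨i, rfl⟩, rfl⟩
    have h := (Indep_iff _ _ _).1 hind ((A n)ᶜ ∩ W) V hWgen hVgen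
    rw [← Set.inter_assoc, h, hAcW, mul_assoc]
  -- conditional probabilities
  have hc1 : μ[|A n] ((⋃ i, A i) ∩ V) = μ V := by
    rw [cond_apply (hmA n)]
    have : A n ∩ ((⋃ i, A i) ∩ V) = A n ∩ V := by
      rw [← Set.inter_assoc, Set.inter_eq_left.2 (Set.subset_iUnion A n)]
    rw [this, hAnV, ← mul_assoc, ENNReal.inv_mul_cancel posA (measure_ne_top μ _), one_mul]
  have hc2 : μ[|(A n)ᶜ] ((⋃ i, A i) ∩ V) = μ W * μ V := by
    rw [cond_apply (hmA n).compl]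
    have h1 : (A n)ᶜ ∩ ((⋃ i, A i) ∩ V) = (A n)ᶜ ∩ (W ∩ V) := by
      ext x
      simp only [Set.mem_inter_iff, Set.mem_compl_iff, Set.mem_iUnion, hWdef]
      constructor
      · rintro ⟨hxn, ⟨i, hi⟩, hv⟩
        refine ⟨hxn, ⟨i, ?_, hi⟩, hv⟩
        rintro rfl; exact hxn hi
      · rintro ⟨hxn, ⟨i, _, hi⟩, hv⟩
        exact ⟨hxn, ⟨i, hi⟩, hv⟩
    rw [h1, hAcWV, ← mul_assoc, ENNReal.inv_mul_cancel posAc (measure_ne_top μ _), one_mul]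
  rw [hc1, hc2, ENNReal.toReal_mul, hVval, hWval]
  ring
end

section
/- If pP > 0, then for any fixed plant index n the conditional probability of the system event given that plant n is available satisfies P(S | P_n) = r^API·(1 - (1-pL)^c·Q^{b-1}), where Q = (1-pP)+pP·(1-pL)^c. (Paper equation (A14).) -/
/-!
On the event `P n`, the system works iff some API supplier is available and some plant can
produce, where plant `n` can produce iff one of its lines is available. Events generated by
disjoint groups of independent events are independent, so the API event, `P n`, and the events
"plant `j` can produce" are independent. Hence the probability that no plant can produce factors
as `(1 - pL) ^ c` for plant `n` times `Q` for each of the other `b - 1` plants.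
-/

open MeasureTheory ProbabilityTheory MeasurableSpace Function

namespace ProbabilityTheory

lemma measurableSet_generateFrom_image {Ω ι : Type*} {s : ι → Set Ω} {S : Set ι} {i : ι}
    (hi : i ∈ S) : MeasurableSet[generateFrom (s '' S)] (s i) :=
  measurableSet_generateFrom (Set.mem_image_of_mem s hi)

variable {Ω ι β : Type*} [MeasurableSpace Ω] {μ : Measure Ω} {s : ι → Set Ω}

lemma generateFrom_image_le (hsm : ∀ i, MeasurableSet (s i)) (S : Set ι) :
    generateFrom (s '' S) ≤ ‹MeasurableSpace Ω› :=
  generateFrom_le (by rintro _ ⟨i, -, rfl⟩; exact hsm i)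

lemma iIndepSet.measure_inter_of_disjoint (hsm : ∀ i, MeasurableSet (s i))
    (hs : iIndepSet s μ) {S T : Set ι} (hST : Disjoint S T) {t₁ t₂ : Set Ω}
    (ht₁ : MeasurableSet[generateFrom (s '' S)] t₁)
    (ht₂ : MeasurableSet[generateFrom (s '' T)] t₂) :
    μ (t₁ ∩ t₂) = μ t₁ * μ t₂ :=
  (Indep_iff _ _ _).1 (hs.indep_generateFrom_of_disjoint hsm S T hST) _ _ ht₁ ht₂

lemma iIndepSet.measureReal_inter_of_disjoint (hsm : ∀ i, MeasurableSet (s i))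
    (hs : iIndepSet s μ) {S T : Set ι} (hST : Disjoint S T) {t₁ t₂ : Set Ω}
    (ht₁ : MeasurableSet[generateFrom (s '' S)] t₁)
    (ht₂ : MeasurableSet[generateFrom (s '' T)] t₂) :
    μ.real (t₁ ∩ t₂) = μ.real t₁ * μ.real t₂ := by
  simp only [measureReal_def, hs.measure_inter_of_disjoint hsm hST ht₁ ht₂, ENNReal.toReal_mul]

lemma iIndepSet.of_pairwise_disjoint (hsm : ∀ i, MeasurableSet (s i)) (hs : iIndepSet s μ)
    {S : β → Set ι} (hS : Pairwise (Disjoint on S)) {t : β → Set Ω}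
    (ht : ∀ j, MeasurableSet[generateFrom (s '' S j)] (t j)) :
    iIndepSet t μ := by
  classical
  refine (iIndepSet_iff_meas_biInter fun j => generateFrom_image_le hsm _ _ (ht j)).2 fun J => ?_
  induction J using Finset.induction_on with
  | empty => have := hs.isProbabilityMeasure; simp
  | @insert j J hj ih =>
    have hJ : MeasurableSet[generateFrom (s '' ⋃ j' ∈ J, S j')] (⋂ j' ∈ J, t j') :=
      .biInter J.countable_toSet fun j' hj' =>
        generateFrom_mono (Set.image_mono (Set.subset_biUnion_of_mem hj')) _ (ht j')
    have hdisj : Disjoint (S j) (⋃ j' ∈ J, S j') :=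
      Set.disjoint_iUnion₂_right.2 fun j' hj' => hS (ne_of_mem_of_not_mem hj' hj).symm
    rw [Finset.set_biInter_insert, hs.measure_inter_of_disjoint hsm hdisj (ht j) hJ, ih,
      Finset.prod_insert hj]

lemma iIndepSet.measureReal_iUnion [Fintype ι] (hsm : ∀ i, MeasurableSet (s i))
    (hs : iIndepSet s μ) :
    μ.real (⋃ i, s i) = 1 - ∏ i, (1 - μ.real (s i)) := by
  have := hs.isProbabilityMeasure
  have hcompl : iIndepSet (fun i => (s i)ᶜ) μ :=
    hs.of_pairwise_disjoint hsm (S := fun i => {i})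
      (fun _ _ hij => Set.disjoint_singleton.2 hij) fun i =>
        (measurableSet_generateFrom_image (Set.mem_singleton i)).compl
  have hprod : μ.real (⋂ i, (s i)ᶜ) = ∏ i, μ.real (s i)ᶜ := by
    simpa [measureReal_def, ENNReal.toReal_prod] using
      congrArg ENNReal.toReal (hcompl.meas_biInter Finset.univ)
  rw [← compl_compl (⋃ i, s i), Set.compl_iUnion,
    probReal_compl_eq_one_sub (.iInter fun i => (hsm i).compl), hprod]
  simp only [probReal_compl_eq_one_sub (hsm _)]

lemma iIndepSet.measureReal_iUnion_of_forall_eq [Fintype ι] (hsm : ∀ i, MeasurableSet (s i))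
    (hs : iIndepSet s μ) {p : ℝ} (hp : ∀ i, μ.real (s i) = p) :
    μ.real (⋃ i, s i) = 1 - (1 - p) ^ Fintype.card ι := by
  simp [hs.measureReal_iUnion hsm, hp]

end ProbabilityTheory

namespace SupplyChain

variable {Ω : Type*} {a b c : ℕ}

def events (A : Fin a → Set Ω) (P : Fin b → Set Ω) (L : Fin b → Fin c → Set Ω) :
    Fin a ⊕ (Fin b ⊕ Fin b × Fin c) → Set Ω :=
  Sum.elim A (Sum.elim P fun jk => L jk.1 jk.2)

/-- Plant `j` can produce, as seen on the event `P n`: for `j = n` the factor `P n` is dropped,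
which makes these events independent of `P n`. -/
def producesGiven (P : Fin b → Set Ω) (L : Fin b → Fin c → Set Ω) (n j : Fin b) : Set Ω :=
  if j = n then ⋃ k, L j k else P j ∩ ⋃ k, L j k

variable {A : Fin a → Set Ω} {P : Fin b → Set Ω} {L : Fin b → Fin c → Set Ω}

section generateFrom

variable {S : Set (Fin a ⊕ (Fin b ⊕ Fin b × Fin c))}

lemma measurableSet_generateFrom_api {i : Fin a} (hi : .inl i ∈ S) :
    MeasurableSet[generateFrom (events A P L '' S)] (A i) :=
  measurableSet_generateFrom_image hi

lemma measurableSet_generateFrom_plant {j : Fin b} (hj : .inr (.inl j) ∈ S) :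
    MeasurableSet[generateFrom (events A P L '' S)] (P j) :=
  measurableSet_generateFrom_image hj

lemma measurableSet_generateFrom_iUnion_lines {j : Fin b} (hj : ∀ k, .inr (.inr (j, k)) ∈ S) :
    MeasurableSet[generateFrom (events A P L '' S)] (⋃ k, L j k) :=
  .iUnion fun k => measurableSet_generateFrom_image (hj k)

lemma measurableSet_generateFrom_producesGiven {n j : Fin b}
    (hP : j ≠ n → .inr (.inl j) ∈ S) (hL : ∀ k, .inr (.inr (j, k)) ∈ S) :
    MeasurableSet[generateFrom (events A P L '' S)] (producesGiven P L n j) := by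
  unfold producesGiven
  split_ifs with hj
  · exact measurableSet_generateFrom_iUnion_lines hL
  · exact (measurableSet_generateFrom_plant (hP hj)).inter
      (measurableSet_generateFrom_iUnion_lines hL)

end generateFrom

lemma inter_iUnion_producesGiven (n : Fin b) :
    P n ∩ ⋃ j, producesGiven P L n j = P n ∩ ⋃ j, P j ∩ ⋃ k, L j k := by
  rw [Set.inter_iUnion, Set.inter_iUnion]
  refine Set.iUnion_congr fun j => ?_
  unfold producesGiven
  split_ifs with hj
  · rw [hj, ← Set.inter_assoc, Set.inter_self]
  · rfl

variable [MeasurableSpace Ω] {μ : Measure Ω}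

lemma measurableSet_events (hmA : ∀ i, MeasurableSet (A i)) (hmP : ∀ j, MeasurableSet (P j))
    (hmL : ∀ j k, MeasurableSet (L j k)) : ∀ i, MeasurableSet (events A P L i)
  | .inl i => hmA i
  | .inr (.inl j) => hmP j
  | .inr (.inr (j, k)) => hmL j k

lemma measureReal_iUnion_api (hm : ∀ i, MeasurableSet (events A P L i))
    (hindep : iIndepSet (events A P L) μ) {pA : ℝ} (hPA : ∀ i, μ.real (A i) = pA) :
    μ.real (⋃ i, A i) = 1 - (1 - pA) ^ a := by
  have hA : iIndepSet A μ := hindep.precomp (g := Sum.inl) Sum.inl_injective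
  have hmA : ∀ i, MeasurableSet (A i) := fun i => hm (.inl i)
  simpa using hA.measureReal_iUnion_of_forall_eq hmA hPA

lemma measureReal_iUnion_lines (hm : ∀ i, MeasurableSet (events A P L i))
    (hindep : iIndepSet (events A P L) μ) {pL : ℝ} (hPL : ∀ j k, μ.real (L j k) = pL)
    (j : Fin b) : μ.real (⋃ k, L j k) = 1 - (1 - pL) ^ c := by
  let line : Fin c → Fin a ⊕ (Fin b ⊕ Fin b × Fin c) := fun k => .inr (.inr (j, k))
  have hL : iIndepSet (L j) μ := hindep.precomp (g := line) fun k k' h => by simpa [line] using h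
  have hmL : ∀ k, MeasurableSet (L j k) := fun k => hm (line k)
  simpa using hL.measureReal_iUnion_of_forall_eq hmL (hPL j)

lemma measureReal_plant_inter_iUnion_lines (hm : ∀ i, MeasurableSet (events A P L i))
    (hindep : iIndepSet (events A P L) μ) {pP pL : ℝ} (hPP : ∀ j, μ.real (P j) = pP)
    (hPL : ∀ j k, μ.real (L j k) = pL) (j : Fin b) :
    μ.real (P j ∩ ⋃ k, L j k) = pP * (1 - (1 - pL) ^ c) := by
  have hdisj : Disjoint ({.inr (.inl j)} : Set (Fin a ⊕ (Fin b ⊕ Fin b × Fin c)))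
      (Set.range fun k => .inr (.inr (j, k))) := by
    simp
  rw [hindep.measureReal_inter_of_disjoint hm hdisj (measurableSet_generateFrom_plant rfl)
    (measurableSet_generateFrom_iUnion_lines fun k => ⟨k, rfl⟩), hPP,
    measureReal_iUnion_lines hm hindep hPL]

lemma iIndepSet_producesGiven (hm : ∀ i, MeasurableSet (events A P L i))
    (hindep : iIndepSet (events A P L) μ) (n : Fin b) :
    iIndepSet (producesGiven P L n) μ := by
  let plant : Fin a ⊕ (Fin b ⊕ Fin b × Fin c) → Option (Fin b) :=
    Sum.elim (fun _ => none) (Sum.elim some (some ∘ Prod.fst))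
  refine hindep.of_pairwise_disjoint hm
    (S := fun j => plant ⁻¹' {some j} \ {.inr (.inl n)})
    (fun j j' hjj' => (Disjoint.preimage plant (by simpa using hjj')).mono
      Set.sdiff_subset Set.sdiff_subset)
    fun j => measurableSet_generateFrom_producesGiven (by simp [plant]) (by simp [plant])

lemma measureReal_iUnion_producesGiven (hm : ∀ i, MeasurableSet (events A P L i))
    (hindep : iIndepSet (events A P L) μ) {pP pL : ℝ} (hPP : ∀ j, μ.real (P j) = pP)
    (hPL : ∀ j k, μ.real (L j k) = pL) (n : Fin b) :
    μ.real (⋃ j, producesGiven P L n j)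
      = 1 - (1 - pL) ^ c * ((1 - pP) + pP * (1 - pL) ^ c) ^ (b - 1) := by
  have hmeas : ∀ j, MeasurableSet (producesGiven P L n j) := fun j =>
    generateFrom_image_le hm Set.univ _
      (measurableSet_generateFrom_producesGiven (fun _ => trivial) fun _ => trivial)
  have hn : 1 - μ.real (producesGiven P L n n) = (1 - pL) ^ c := by
    rw [producesGiven, if_pos rfl, measureReal_iUnion_lines hm hindep hPL]
    ring
  have hne : ∀ j ∈ ({n}ᶜ : Finset (Fin b)),
      1 - μ.real (producesGiven P L n j) = (1 - pP) + pP * (1 - pL) ^ c := fun j hj => by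
    rw [producesGiven, if_neg (by simpa using hj),
      measureReal_plant_inter_iUnion_lines hm hindep hPP hPL]
    ring
  rw [(iIndepSet_producesGiven hm hindep n).measureReal_iUnion hmeas,
    Fintype.prod_eq_mul_prod_compl n, hn, Finset.prod_congr rfl hne, Finset.prod_const,
    Finset.card_compl, Finset.card_singleton, Fintype.card_fin]

lemma measureReal_plant_inter_iUnion_plants (hm : ∀ i, MeasurableSet (events A P L i))
    (hindep : iIndepSet (events A P L) μ) {pP pL : ℝ} (hPP : ∀ j, μ.real (P j) = pP)
    (hPL : ∀ j k, μ.real (L j k) = pL) (n : Fin b) :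
    μ.real (P n ∩ ⋃ j, P j ∩ ⋃ k, L j k)
      = pP * (1 - (1 - pL) ^ c * ((1 - pP) + pP * (1 - pL) ^ c) ^ (b - 1)) := by
  rw [← inter_iUnion_producesGiven, hindep.measureReal_inter_of_disjoint hm
    (S := {.inr (.inl n)}) (T := {.inr (.inl n)}ᶜ) disjoint_compl_right
    (measurableSet_generateFrom_plant rfl)
    (.iUnion fun j => measurableSet_generateFrom_producesGiven (by simp) (by simp)),
    hPP, measureReal_iUnion_producesGiven hm hindep hPP hPL]

lemma measureReal_iUnion_api_inter (hm : ∀ i, MeasurableSet (events A P L i))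
    (hindep : iIndepSet (events A P L) μ) (n : Fin b) :
    μ.real ((⋃ i, A i) ∩ (P n ∩ ⋃ j, P j ∩ ⋃ k, L j k))
      = μ.real (⋃ i, A i) * μ.real (P n ∩ ⋃ j, P j ∩ ⋃ k, L j k) :=
  hindep.measureReal_inter_of_disjoint hm Set.isCompl_range_inl_range_inr.disjoint
    (.iUnion fun i => measurableSet_generateFrom_api (Set.mem_range_self i))
    ((measurableSet_generateFrom_plant (Set.mem_range_self _)).inter
      (.iUnion fun _ => (measurableSet_generateFrom_plant (Set.mem_range_self _)).inter
        (measurableSet_generateFrom_iUnion_lines fun _ => Set.mem_range_self _)))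

end SupplyChain

theorem stmt_5_general
    {Ω : Type*} [MeasurableSpace Ω] (μ : Measure Ω)
    (pA pP pL : ℝ)
    (a b c : ℕ)
    (A : Fin a → Set Ω) (P : Fin b → Set Ω) (L : Fin b → Fin c → Set Ω)
    (hmA : ∀ i, MeasurableSet (A i)) (hmP : ∀ j, MeasurableSet (P j))
    (hmL : ∀ j k, MeasurableSet (L j k))
    (hindep : iIndepSet
      (Sum.elim A (Sum.elim P (fun jk : Fin b × Fin c => L jk.1 jk.2))) μ)
    (hPA : ∀ i, (μ (A i)).toReal = pA)
    (hPP : ∀ j, (μ (P j)).toReal = pP)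
    (hPL : ∀ j k, (μ (L j k)).toReal = pL)
    (hpPpos : 0 < pP) (n : Fin b) :
    (μ[|P n] ((⋃ i, A i) ∩ ⋃ j, P j ∩ ⋃ k, L j k)).toReal
        = (1 - (1 - pA) ^ a) *
          (1 - (1 - pL) ^ c * ((1 - pP) + pP * (1 - pL) ^ c) ^ (b - 1)) := by
  have hm := SupplyChain.measurableSet_events hmA hmP hmL
  change iIndepSet (SupplyChain.events A P L) μ at hindep
  simp only [← measureReal_def] at hPA hPP hPL
  rw [cond_apply (hmP n), ENNReal.toReal_mul, ENNReal.toReal_inv, ← measureReal_def,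
    ← measureReal_def, Set.inter_left_comm, SupplyChain.measureReal_iUnion_api_inter hm hindep,
    SupplyChain.measureReal_iUnion_api hm hindep hPA,
    SupplyChain.measureReal_plant_inter_iUnion_plants hm hindep hPP hPL, hPP]
  field_simp

theorem stmt_5
    {Ω : Type*} [MeasurableSpace Ω] (μ : Measure Ω) [IsProbabilityMeasure μ]
    (pA pP pL : ℝ)
    (hpA0 : 0 ≤ pA) (hpA1 : pA ≤ 1) (hpP0 : 0 ≤ pP) (hpP1 : pP ≤ 1)
    (hpL0 : 0 ≤ pL) (hpL1 : pL ≤ 1)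
    (a b c : ℕ) (ha : 0 < a) (hb : 0 < b) (hc : 0 < c)
    (A : Fin a → Set Ω) (P : Fin b → Set Ω) (L : Fin b → Fin c → Set Ω)
    (hmA : ∀ i, MeasurableSet (A i)) (hmP : ∀ j, MeasurableSet (P j))
    (hmL : ∀ j k, MeasurableSet (L j k))
    (hindep : iIndepSet
      (Sum.elim A (Sum.elim P (fun jk : Fin b × Fin c => L jk.1 jk.2))) μ)
    (hPA : ∀ i, (μ (A i)).toReal = pA)
    (hPP : ∀ j, (μ (P j)).toReal = pP)
    (hPL : ∀ j k, (μ (L j k)).toReal = pL)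
    (hpPpos : 0 < pP) (n : Fin b) :
    (μ[|P n] ((⋃ i, A i) ∩ ⋃ j, P j ∩ ⋃ k, L j k)).toReal
        = (1 - (1 - pA) ^ a) *
          (1 - (1 - pL) ^ c * ((1 - pP) + pP * (1 - pL) ^ c) ^ (b - 1)) :=
  stmt_5_general μ pA pP pL a b c A P L hmA hmP hmL hindep hPA hPP hPL hpPpos n
end

section
/- If 0 < pP < 1, then for any fixed plant index n the probability that the failure of that plant causes a system failure, namely P(S | P_n) - P(S | P_nᶜ), equals r^API·(1-(1-pL)^c)·Q^{b-1}, where Q = (1-pP)+pP·(1-pL)^c. (Paper equation (8)/(A17): Birnbaum importance of a manufacturing plant.) -/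
open MeasureTheory ProbabilityTheory

set_option maxHeartbeats 1000000 in
theorem stmt_7
    {Ω : Type*} [MeasurableSpace Ω] (μ : Measure Ω) [IsProbabilityMeasure μ]
    (pA pP pL : ℝ)
    (hpA0 : 0 ≤ pA) (hpA1 : pA ≤ 1) (hpP0 : 0 ≤ pP) (hpP1 : pP ≤ 1)
    (hpL0 : 0 ≤ pL) (hpL1 : pL ≤ 1)
    (a b c : ℕ) (ha : 0 < a) (hb : 0 < b) (hc : 0 < c)
    (A : Fin a → Set Ω) (P : Fin b → Set Ω) (L : Fin b → Fin c → Set Ω)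
    (hmA : ∀ i, MeasurableSet (A i)) (hmP : ∀ j, MeasurableSet (P j))
    (hmL : ∀ j k, MeasurableSet (L j k))
    (hindep : iIndepSet
      (Sum.elim A (Sum.elim P (fun jk : Fin b × Fin c => L jk.1 jk.2))) μ)
    (hPA : ∀ i, (μ (A i)).toReal = pA)
    (hPP : ∀ j, (μ (P j)).toReal = pP)
    (hPL : ∀ j k, (μ (L j k)).toReal = pL)
    (hpPpos : 0 < pP) (hpPlt : pP < 1) (n : Fin b) :
    (μ[|P n] ((⋃ i, A i) ∩ ⋃ j, P j ∩ ⋃ k, L j k)).toReal - (μ[|(P n)ᶜ] ((⋃ i, A i) ∩ ⋃ j, P j ∩ ⋃ k, L j k)).toReal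
        = (1 - (1 - pA) ^ a) * (1 - (1 - pL) ^ c) *
          ((1 - pP) + pP * (1 - pL) ^ c) ^ (b - 1) := by
  classical
  set F := Sum.elim A (Sum.elim P (fun jk : Fin b × Fin c => L jk.1 jk.2)) with hFdef
  -- basic probability facts
  have prob_compl : ∀ {s : Set Ω}, MeasurableSet s → (μ sᶜ).toReal = 1 - (μ s).toReal := by
    intro s hs
    rw [measure_compl hs (measure_ne_top μ s), measure_univ,
      ENNReal.toReal_sub_of_le prob_le_one ENNReal.one_ne_top]
    simp
  -- notation
  set U : Set Ω := ⋃ i, A i with hUdef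
  set W : Set Ω := ⋃ j, P j ∩ ⋃ k, L j k with hWdef
  set Cu : Set Ω := ⋂ i, (A i)ᶜ with hCudef
  set E : Fin b → Set Ω := fun j => P j ∩ ⋂ k, (L j k)ᶜ with hEdef
  set G : Fin b → Bool → Set Ω := fun j x => cond x (E j) (P j)ᶜ with hGdef
  set q1 : ℝ := pP * (1 - pL) ^ c with hq1def
  set Q : ℝ := (1 - pP) + q1 with hQdef
  have hmE : ∀ j, MeasurableSet (E j) := fun j =>
    (hmP j).inter (MeasurableSet.iInter fun k => (hmL j k).compl)
  have hmG : ∀ j x, MeasurableSet (G j x) := by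
    intro j x; cases x
    · exact (hmP j).compl
    · exact hmE j
  have hmCu : MeasurableSet Cu := MeasurableSet.iInter fun i => (hmA i).compl
  have hmU : MeasurableSet U := MeasurableSet.iUnion fun i => hmA i
  have hmW : MeasurableSet W :=
    MeasurableSet.iUnion fun j => (hmP j).inter (MeasurableSet.iUnion fun k => hmL j k)
  -- master independence computation
  have master : ∀ g : (Fin a ⊕ (Fin b ⊕ Fin b × Fin c)) → Set Ω,
      (∀ i, g i = F i ∨ g i = (F i)ᶜ ∨ g i = Set.univ) →
      μ (⋂ i, g i) = ∏ i, μ (g i) := by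
    intro g hg
    refine ((iIndepSet_iff_iIndep _ _).1 hindep).meas_iInter (fun i => ?_)
    have hFi : MeasurableSet[MeasurableSpace.generateFrom {F i}] (F i) :=
      MeasurableSpace.measurableSet_generateFrom rfl
    rcases hg i with h | h | h <;> rw [h]
    · exact hFi
    · exact hFi.compl
    · exact MeasurableSet.univ
  -- values of the atoms
  have hAc : ∀ i, (μ ((A i)ᶜ)).toReal = 1 - pA := fun i => by
    rw [prob_compl (hmA i), hPA]
  have hPc : ∀ j, (μ ((P j)ᶜ)).toReal = 1 - pP := fun j => by
    rw [prob_compl (hmP j), hPP]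
  have hLc : ∀ j k, (μ ((L j k)ᶜ)).toReal = 1 - pL := fun j k => by
    rw [prob_compl (hmL j k), hPL]
  -- key2 : measure of a full configuration
  have key2 : ∀ (y : Bool) (f : Fin b → Bool),
      (μ ((cond y Cu Set.univ) ∩ ⋂ j, G j (f j))).toReal
        = (cond y ((1 - pA) ^ a) 1) * ∏ j, (cond (f j) q1 (1 - pP)) := by
    intro y f
    set g : (Fin a ⊕ (Fin b ⊕ Fin b × Fin c)) → Set Ω :=
      Sum.elim (fun i => cond y ((A i)ᶜ) Set.univ)
        (Sum.elim (fun j => cond (f j) (P j) ((P j)ᶜ))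
          (fun jk => cond (f jk.1) ((L jk.1 jk.2)ᶜ) Set.univ)) with hgdef
    have hg : ∀ i, g i = F i ∨ g i = (F i)ᶜ ∨ g i = Set.univ := by
      rintro (i | j | ⟨j, k⟩)
      · cases y
        · right; right; simp [hgdef]
        · right; left; simp [hgdef, hFdef]
      · cases hfj : f j
        · right; left; simp [hgdef, hFdef, hfj]
        · left; simp [hgdef, hFdef, hfj]
      · cases hfj : f j
        · right; right; simp [hgdef, hfj]
        · right; left; simp [hgdef, hFdef, hfj]
    have hset : (cond y Cu Set.univ) ∩ ⋂ j, G j (f j) = ⋂ i, g i := by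
      ext ω
      simp only [hgdef, Set.mem_inter_iff, Set.mem_iInter, Sum.forall, Prod.forall,
        Sum.elim_inl, Sum.elim_inr]
      have hy : (ω ∈ cond y Cu Set.univ) ↔ ∀ i, ω ∈ cond y ((A i)ᶜ) Set.univ := by
        cases y <;> simp [hCudef, Set.mem_iInter]
      have hj : ∀ j, (ω ∈ G j (f j)) ↔
          ((ω ∈ cond (f j) (P j) ((P j)ᶜ)) ∧ ∀ k, ω ∈ cond (f j) ((L j k)ᶜ) Set.univ) := by
        intro j
        cases hfj : f j <;> simp [hGdef, hEdef, Set.mem_iInter]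
      constructor
      · rintro ⟨h0, h1⟩
        exact ⟨hy.1 h0, fun j => ((hj j).1 (h1 j)).1, fun j k => ((hj j).1 (h1 j)).2 k⟩
      · rintro ⟨h0, h1, h2⟩
        exact ⟨hy.2 h0, fun j => (hj j).2 ⟨h1 j, fun k => h2 j k⟩⟩
    rw [hset, master g hg, ENNReal.toReal_prod, Fintype.prod_sum_type, Fintype.prod_sum_type]
    have e1 : (∏ i : Fin a, (μ (g (Sum.inl i))).toReal) = cond y ((1 - pA) ^ a) 1 := by
      cases y <;> simp [hgdef, hAc]
    have e3 : (∏ jk : Fin b × Fin c, (μ (g (Sum.inr (Sum.inr jk)))).toReal)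
        = ∏ j : Fin b, ∏ k : Fin c, (μ (g (Sum.inr (Sum.inr (j, k))))).toReal :=
      Fintype.prod_prod_type _
    rw [e1, e3, ← Finset.prod_mul_distrib]
    congr 1
    refine Finset.prod_congr rfl fun j _ => ?_
    cases hfj : f j
    · simp [hgdef, hfj, hPc]
    · simp [hgdef, hfj, hPP, hLc, hq1def]
  -- base : measure of configuration with only the n-th plant constrained
  have base : ∀ (y x : Bool),
      (μ ((cond y Cu Set.univ) ∩ (cond x (P n) ((P n)ᶜ)))).toReal
        = (cond y ((1 - pA) ^ a) 1) * (cond x pP (1 - pP)) := by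
    intro y x
    set g : (Fin a ⊕ (Fin b ⊕ Fin b × Fin c)) → Set Ω :=
      Sum.elim (fun i => cond y ((A i)ᶜ) Set.univ)
        (Sum.elim (fun j => if j = n then cond x (P n) ((P n)ᶜ) else Set.univ)
          (fun _ => Set.univ)) with hgdef
    have hg : ∀ i, g i = F i ∨ g i = (F i)ᶜ ∨ g i = Set.univ := by
      rintro (i | j | ⟨j, k⟩)
      · cases y
        · right; right; simp [hgdef]
        · right; left; simp [hgdef, hFdef]
      · by_cases hj : j = n
        · subst hj
          cases x
          · right; left; simp [hgdef, hFdef]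
          · left; simp [hgdef, hFdef]
        · right; right; simp [hgdef, hj]
      · right; right; simp [hgdef]
    have hset : (cond y Cu Set.univ) ∩ (cond x (P n) ((P n)ᶜ)) = ⋂ i, g i := by
      ext ω
      simp only [hgdef, Set.mem_inter_iff, Set.mem_iInter, Sum.forall, Prod.forall,
        Sum.elim_inl, Sum.elim_inr, Set.mem_univ, and_true]
      have hy : (ω ∈ cond y Cu Set.univ) ↔ ∀ i, ω ∈ cond y ((A i)ᶜ) Set.univ := by
        cases y <;> simp [hCudef, Set.mem_iInter]
      constructor
      · rintro ⟨h0, h1⟩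
        refine ⟨hy.1 h0, fun j => ?_, fun _ _ => trivial⟩
        by_cases hj : j = n <;> simp [hj, h1]
      · rintro ⟨h0, h1, -⟩
        refine ⟨hy.2 h0, ?_⟩
        simpa using h1 n
    rw [hset, master g hg, ENNReal.toReal_prod, Fintype.prod_sum_type, Fintype.prod_sum_type]
    have e1 : (∏ i : Fin a, (μ (g (Sum.inl i))).toReal) = cond y ((1 - pA) ^ a) 1 := by
      cases y <;> simp [hgdef, hAc]
    have e2 : (∏ j : Fin b, (μ (g (Sum.inr (Sum.inl j)))).toReal) = cond x pP (1 - pP) := by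
      rw [Finset.prod_eq_single n (fun j _ hj => by simp [hgdef, hj]) (by simp)]
      cases x <;> simp [hgdef, hPc, hPP]
    have e3 : (∏ jk : Fin b × Fin c, (μ (g (Sum.inr (Sum.inr jk)))).toReal) = 1 := by
      simp [hgdef]
    rw [e1, e2, e3, mul_one]
  -- Wᶜ as a disjoint union
  have hWc : Wᶜ = ⋃ f : Fin b → Bool, ⋂ j, G j (f j) := by
    ext ω
    simp only [hWdef, Set.mem_compl_iff, Set.mem_iUnion, Set.mem_iInter, not_exists,
      Set.mem_inter_iff, not_and]
    rw [← Classical.skolem (p := fun j x => ω ∈ G j x)]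
    refine forall_congr' fun j => ?_
    constructor
    · intro h
      by_cases hp : ω ∈ P j
      · exact ⟨true, by simp [hGdef, hEdef, Set.mem_iInter, hp, h hp]⟩
      · exact ⟨false, by simp [hGdef, hp]⟩
    · rintro ⟨x, hx⟩ hp
      cases x
      · simp [hGdef] at hx; exact absurd hp hx
      · simp only [hGdef, hEdef, cond_true, Set.mem_inter_iff, Set.mem_iInter] at hx
        intro k hk
        exact (hx.2 k) hk
  -- disjointness of the pieces
  have hdisj : ∀ (f f' : Fin b → Bool), f ≠ f' →
      Disjoint (⋂ j, G j (f j)) (⋂ j, G j (f' j)) := by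
    intro f f' hne
    obtain ⟨j, hj⟩ := Function.ne_iff.1 hne
    refine Set.disjoint_left.2 fun ω h1 h2 => ?_
    have g1 : ω ∈ G j (f j) := Set.mem_iInter.1 h1 j
    have g2 : ω ∈ G j (f' j) := Set.mem_iInter.1 h2 j
    cases hf : f j <;> cases hf' : f' j <;> rw [hf] at g1 <;> rw [hf'] at g2
    · exact hj (hf.trans hf'.symm)
    · have hnp : ω ∉ P j := by simpa [hGdef] using g1
      have hp : ω ∈ P j := by
        have hE : ω ∈ E j := by simpa [hGdef] using g2
        have : ω ∈ P j ∧ ∀ k, ω ∉ L j k := by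
          simpa [hEdef, Set.mem_iInter] using hE
        exact this.1
      exact hnp hp
    · have hnp : ω ∉ P j := by simpa [hGdef] using g2
      have hp : ω ∈ P j := by
        have hE : ω ∈ E j := by simpa [hGdef] using g1
        have : ω ∈ P j ∧ ∀ k, ω ∉ L j k := by
          simpa [hEdef, Set.mem_iInter] using hE
        exact this.1
      exact hnp hp
    · exact hj (hf.trans hf'.symm)
  -- key3 : measure of (cond y Cu univ) ∩ Wᶜ ∩ (cond x (P n) (P n)ᶜ)
  have key3 : ∀ (y x : Bool),
      (μ ((cond y Cu Set.univ) ∩ Wᶜ ∩ (cond x (P n) ((P n)ᶜ)))).toReal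
        = (cond y ((1 - pA) ^ a) 1) * (cond x q1 (1 - pP)) * Q ^ (b - 1) := by
    intro y x
    have hmZ : MeasurableSet (cond y Cu Set.univ) := by
      cases y
      · exact MeasurableSet.univ
      · exact hmCu
    have hmX : MeasurableSet (cond x (P n) ((P n)ᶜ)) := by
      cases x
      · exact (hmP n).compl
      · exact hmP n
    have hEP : ∀ j, E j ⊆ P j := by
      intro j
      rw [hEdef]
      exact Set.inter_subset_left
    have hGX : G n (!x) ∩ (cond x (P n) ((P n)ᶜ)) = ∅ := by
      cases x
      · -- !x = true : E n ∩ (P n)ᶜ = ∅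
        refine Set.eq_empty_of_subset_empty fun ω hω => ?_
        have h1 : ω ∈ P n := hEP n (by simpa [hGdef] using hω.1)
        exact hω.2 h1
      · -- !x = false : (P n)ᶜ ∩ P n = ∅
        refine Set.eq_empty_of_subset_empty fun ω hω => ?_
        have h1 : ω ∉ P n := by simpa [hGdef] using hω.1
        exact h1 hω.2
    have hGXsub : G n x ⊆ cond x (P n) ((P n)ᶜ) := by
      cases x
      · exact fun ω hω => by simpa [hGdef] using hω
      · exact fun ω hω => hEP n (by simpa [hGdef] using hω)
    have hsplit : (cond y Cu Set.univ) ∩ Wᶜ ∩ (cond x (P n) ((P n)ᶜ))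
        = ⋃ f : Fin b → Bool,
            ((cond y Cu Set.univ) ∩ (⋂ j, G j (f j)) ∩ (cond x (P n) ((P n)ᶜ))) := by
      rw [hWc]
      ext ω
      simp only [Set.mem_inter_iff, Set.mem_iUnion]
      tauto
    rw [hsplit, measure_iUnion ?_ ?_]
    · rw [tsum_fintype, ENNReal.toReal_sum (fun f _ => measure_ne_top μ _)]
      have hterm : ∀ f : Fin b → Bool,
          (μ ((cond y Cu Set.univ) ∩ (⋂ j, G j (f j)) ∩ (cond x (P n) ((P n)ᶜ)))).toReal
            = (cond y ((1 - pA) ^ a) 1) *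
              ∏ j, (if j = n then (if f j = x then (cond (f j) q1 (1 - pP)) else 0)
                     else (cond (f j) q1 (1 - pP))) := by
        intro f
        by_cases hfn : f n = x
        · have habs : (cond y Cu Set.univ) ∩ (⋂ j, G j (f j)) ∩ (cond x (P n) ((P n)ᶜ))
              = (cond y Cu Set.univ) ∩ ⋂ j, G j (f j) := by
            refine Set.inter_eq_left.2 ?_
            refine subset_trans ?_ hGXsub
            refine subset_trans Set.inter_subset_right ?_
            rw [← hfn]
            exact Set.iInter_subset _ n
          rw [habs, key2 y f]
          congr 1
          refine Finset.prod_congr rfl fun j _ => ?_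
          by_cases hj : j = n <;> simp [hj, hfn]
        · have hfn' : f n = !x := by
            cases hx : x <;> cases hfn2 : f n
            · exact absurd (hfn2.trans hx.symm) hfn
            · simp
            · simp
            · exact absurd (hfn2.trans hx.symm) hfn
          have hempty : (cond y Cu Set.univ) ∩ (⋂ j, G j (f j)) ∩ (cond x (P n) ((P n)ᶜ))
              = ∅ := by
            have h0 : (⋂ j, G j (f j)) ∩ (cond x (P n) ((P n)ᶜ)) = ∅ := by
              refine Set.eq_empty_of_subset_empty ?_
              rw [← hGX, ← hfn']
              exact Set.inter_subset_inter_left _ (Set.iInter_subset _ n)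
            rw [Set.inter_assoc, h0, Set.inter_empty]
          rw [hempty]
          rw [Finset.prod_eq_zero (Finset.mem_univ n) (by simp [hfn])]
          simp
      simp only [hterm]
      rw [← Finset.mul_sum]
      have hsum : (∑ f : Fin b → Bool,
          ∏ j, (if j = n then (if f j = x then (cond (f j) q1 (1 - pP)) else 0)
                 else (cond (f j) q1 (1 - pP))))
          = ∏ j : Fin b, (∑ t : Bool,
              (if j = n then (if t = x then (cond t q1 (1 - pP)) else 0)
                else (cond t q1 (1 - pP)))) := by
        rw [Finset.prod_univ_sum (fun _ => Finset.univ)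
          (fun j t => if j = n then (if t = x then (cond t q1 (1 - pP)) else 0)
            else (cond t q1 (1 - pP))), Fintype.piFinset_univ]
      rw [hsum]
      have hfac : ∀ j : Fin b, (∑ t : Bool,
          (if j = n then (if t = x then (cond t q1 (1 - pP)) else 0)
            else (cond t q1 (1 - pP)))) = if j = n then (cond x q1 (1 - pP)) else Q := by
        intro j
        by_cases hj : j = n <;> cases x <;>
          simp [hj, Fintype.sum_bool, hQdef] <;> ring
      rw [Finset.prod_congr rfl fun j _ => hfac j]
      rw [← Finset.mul_prod_erase Finset.univ _ (Finset.mem_univ n)]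
      simp only [eq_self_iff_true, if_true]
      have herase : (∏ j ∈ Finset.univ.erase n, if j = n then (cond x q1 (1 - pP)) else Q)
          = Q ^ (b - 1) := by
        rw [Finset.prod_congr rfl (fun j hj => if_neg (Finset.mem_erase.1 hj).1),
          Finset.prod_const, Finset.card_erase_of_mem (Finset.mem_univ n)]
        simp
      rw [herase]
      ring
    · intro f f' hne
      exact Set.disjoint_left.2 fun ω h1 h2 =>
        Set.disjoint_left.1 (hdisj f f' hne) h1.1.2 h2.1.2
    · intro f
      exact (hmZ.inter (MeasurableSet.iInter fun j => hmG j (f j))).inter hmX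
  -- system event and its complement
  set S : Set Ω := U ∩ W with hSdef
  have hmS : MeasurableSet S := hmU.inter hmW
  have hScompl : Sᶜ = Cu ∪ Wᶜ := by
    rw [hSdef, Set.compl_inter]
    congr 1
    rw [hUdef, Set.compl_iUnion]
  -- computation of μ(X ∩ S) for X = P n and X = (P n)ᶜ
  have main : ∀ x : Bool,
      (μ ((cond x (P n) ((P n)ᶜ)) ∩ S)).toReal
        = (cond x pP (1 - pP)) - ((1 - pA) ^ a * (cond x pP (1 - pP))
            + (cond x q1 (1 - pP)) * Q ^ (b - 1)
            - (1 - pA) ^ a * (cond x q1 (1 - pP)) * Q ^ (b - 1)) := by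
    intro x
    set X : Set Ω := cond x (P n) ((P n)ᶜ) with hXdef
    have hmX : MeasurableSet X := by cases x <;> simp [hXdef, hmP n, (hmP n).compl]
    have hXval : (μ X).toReal = cond x pP (1 - pP) := by
      have := base false x
      simpa using this
    have h1 : (μ (X ∩ S)).toReal + (μ (X ∩ Sᶜ)).toReal = (μ X).toReal := by
      rw [← ENNReal.toReal_add (measure_ne_top μ _) (measure_ne_top μ _), ← Set.diff_eq]
      rw [measure_inter_add_diff X hmS]
    have h2 : (μ ((X ∩ Cu) ∪ (X ∩ Wᶜ))).toReal + (μ ((X ∩ Cu) ∩ (X ∩ Wᶜ))).toReal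
        = (μ (X ∩ Cu)).toReal + (μ (X ∩ Wᶜ)).toReal := by
      rw [← ENNReal.toReal_add (measure_ne_top μ _) (measure_ne_top μ _),
        ← ENNReal.toReal_add (measure_ne_top μ _) (measure_ne_top μ _),
        measure_union_add_inter _ (hmX.inter hmW.compl)]
    have hu : (X ∩ Cu) ∪ (X ∩ Wᶜ) = X ∩ Sᶜ := by
      rw [hScompl, Set.inter_union_distrib_left]
    have hi : (X ∩ Cu) ∩ (X ∩ Wᶜ) = Cu ∩ Wᶜ ∩ X := by
      ext ω; simp only [Set.mem_inter_iff]; tauto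
    have hXCu : (μ (X ∩ Cu)).toReal = (1 - pA) ^ a * (cond x pP (1 - pP)) := by
      rw [Set.inter_comm]
      have := base true x
      simpa using this
    have hXWc : (μ (X ∩ Wᶜ)).toReal = (cond x q1 (1 - pP)) * Q ^ (b - 1) := by
      rw [Set.inter_comm]
      have := key3 false x
      simpa using this
    have hCWX : (μ (Cu ∩ Wᶜ ∩ X)).toReal
        = (1 - pA) ^ a * (cond x q1 (1 - pP)) * Q ^ (b - 1) := by
      have := key3 true x
      simpa using this
    rw [hu, hi, hXCu, hXWc, hCWX] at h2
    rw [hXval] at h1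
    linarith
  -- conditional probabilities
  have hmuPn : (μ (P n)).toReal = pP := hPP n
  have hmuPnc : (μ ((P n)ᶜ)).toReal = 1 - pP := hPc n
  have hc1 : (μ[|P n] S).toReal = pP⁻¹ * (μ (P n ∩ S)).toReal := by
    rw [cond_apply (hmP n) μ S, ENNReal.toReal_mul, ENNReal.toReal_inv, hmuPn]
  have hc2 : (μ[|(P n)ᶜ] S).toReal = (1 - pP)⁻¹ * (μ ((P n)ᶜ ∩ S)).toReal := by
    rw [cond_apply (hmP n).compl μ S, ENNReal.toReal_mul, ENNReal.toReal_inv, hmuPnc]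
  have hv1 := main true
  have hv2 := main false
  simp only [cond_true] at hv1
  simp only [cond_false] at hv2
  rw [hc1, hc2, hv1, hv2]
  have hpP' : pP ≠ 0 := ne_of_gt hpPpos
  have hpP1' : (1 : ℝ) - pP ≠ 0 := by linarith
  field_simp [hq1def]
  ring
end

section
/- If pL < 1, then for any fixed line indices (j,k) the conditional probability of the system event given that line L_{j,k} is unavailable satisfies P(S | L_{j,k}ᶜ) = r^API·( pP·[(1-(1-pL)^{c-1}) + (1-pL)^{c-1}·(1-Q^{b-1})] + (1-pP)·(1-Q^{b-1}) ), where Q = (1-pP)+pP·(1-pL)^c. (Paper equation (A20).) -/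
open MeasureTheory ProbabilityTheory MeasurableSpace
open scoped ENNReal

set_option maxHeartbeats 1000000

private lemma measLe' {Ω : Type*} {m₁ m₂ : MeasurableSpace Ω} (h : m₁ ≤ m₂) {s : Set Ω}
    (hs : MeasurableSet[m₁] s) : MeasurableSet[m₂] s := h _ hs

theorem stmt_9
    {Ω : Type*} [MeasurableSpace Ω] (μ : Measure Ω) [IsProbabilityMeasure μ]
    (pA pP pL : ℝ)
    (hpA0 : 0 ≤ pA) (hpA1 : pA ≤ 1) (hpP0 : 0 ≤ pP) (hpP1 : pP ≤ 1)
    (hpL0 : 0 ≤ pL) (hpL1 : pL ≤ 1)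
    (a b c : ℕ) (ha : 0 < a) (hb : 0 < b) (hc : 0 < c)
    (A : Fin a → Set Ω) (P : Fin b → Set Ω) (L : Fin b → Fin c → Set Ω)
    (hmA : ∀ i, MeasurableSet (A i)) (hmP : ∀ j, MeasurableSet (P j))
    (hmL : ∀ j k, MeasurableSet (L j k))
    (hindep : iIndepSet
      (Sum.elim A (Sum.elim P (fun jk : Fin b × Fin c => L jk.1 jk.2))) μ)
    (hPA : ∀ i, (μ (A i)).toReal = pA)
    (hPP : ∀ j, (μ (P j)).toReal = pP)
    (hPL : ∀ j k, (μ (L j k)).toReal = pL)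
    (hpLlt : pL < 1) (j : Fin b) (k : Fin c) :
    (μ[|(L j k)ᶜ] ((⋃ i, A i) ∩ ⋃ j, P j ∩ ⋃ k, L j k)).toReal
        = (1 - (1 - pA) ^ a) *
          (pP * ((1 - (1 - pL) ^ (c - 1)) +
              (1 - pL) ^ (c - 1) *
                (1 - ((1 - pP) + pP * (1 - pL) ^ c) ^ (b - 1))) +
            (1 - pP) * (1 - ((1 - pP) + pP * (1 - pL) ^ c) ^ (b - 1))) := by
  classical
  set F : (Fin a ⊕ (Fin b ⊕ Fin b × Fin c)) → Set Ω :=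
    Sum.elim A (Sum.elim P (fun jk : Fin b × Fin c => L jk.1 jk.2)) with hFdef
  set m : (Fin a ⊕ (Fin b ⊕ Fin b × Fin c)) → MeasurableSpace Ω :=
    fun i => MeasurableSpace.generateFrom {F i} with hmdef
  have hind : iIndep m μ := (iIndepSet_iff_iIndep F μ).1 hindep
  have hFm : ∀ i, MeasurableSet (F i) := by
    rintro (i | j' | ⟨j', k'⟩)
    · exact hmA i
    · exact hmP j'
    · exact hmL j' k'
  have h_le : ∀ i, m i ≤ ‹MeasurableSpace Ω› := fun i =>
    MeasurableSpace.generateFrom_le (by rintro t rfl; exact hFm i)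
  set g : (Fin a ⊕ (Fin b ⊕ Fin b × Fin c)) → Option (Option (Fin b)) :=
    Sum.elim (fun _ => none)
      (Sum.elim (fun j' => some (some j'))
        (fun jk => if jk.1 = j ∧ jk.2 = k then some none else some (some jk.1))) with hgdef
  set sup : Set (Fin a ⊕ (Fin b ⊕ Fin b × Fin c)) → MeasurableSpace Ω :=
    fun Gs => ⨆ i ∈ Gs, m i with hsupdef
  have sup_mono : ∀ {S T}, S ⊆ T → sup S ≤ sup T := fun hST => biSup_mono hST
  have memF : ∀ {Gs i}, i ∈ Gs → MeasurableSet[sup Gs] (F i) := by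
    intro Gs i hi
    have h1 : m i ≤ sup Gs := by
      rw [hsupdef]
      exact le_iSup₂ (f := fun i' (_ : i' ∈ Gs) => m i') i hi
    refine measLe' h1 ?_
    rw [hmdef]
    exact measurableSet_generateFrom (Set.mem_singleton _)
  have hfac : ∀ (S T : Set (Fin a ⊕ (Fin b ⊕ Fin b × Fin c))), Disjoint S T →
      ∀ u v : Set Ω, MeasurableSet[sup S] u → MeasurableSet[sup T] v →
      μ (u ∩ v) = μ u * μ v := by
    intro S T hST u v hu hv
    exact (Indep_iff _ _ μ).1 (indep_iSup_of_disjoint h_le hind hST) u v hu hv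
  set KSf : Fin b → Finset (Fin c) :=
    fun j' => if j' = j then Finset.univ.erase k else Finset.univ with hKS
  set E : Fin b → Set Ω := fun j' => P j' ∩ ⋃ k' ∈ KSf j', L j' k' with hE
  set G : Fin b → Set (Fin a ⊕ (Fin b ⊕ Fin b × Fin c)) :=
    fun j' => g ⁻¹' {some (some j')} with hG
  have hG_P : ∀ j', (Sum.inr (Sum.inl j') : Fin a ⊕ (Fin b ⊕ Fin b × Fin c)) ∈ G j' := by
    intro j'; simp [hG, hgdef]
  have hG_L : ∀ j' k', k' ∈ KSf j' →
      (Sum.inr (Sum.inr (j', k')) : Fin a ⊕ (Fin b ⊕ Fin b × Fin c)) ∈ G j' := by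
    intro j' k' hk'
    have hno : ¬(j' = j ∧ k' = k) := by
      rintro ⟨rfl, rfl⟩; simp [hKS] at hk'
    simp [hG, hgdef, hno]
  have hmE : ∀ j', MeasurableSet[sup (G j')] (E j') := by
    intro j'
    show MeasurableSet[sup (G j')] (P j' ∩ ⋃ k' ∈ KSf j', L j' k')
    refine (memF (hG_P j')).inter ?_
    refine Finset.measurableSet_biUnion _ ?_
    intro k' hk'
    exact memF (hG_L j' k' hk')
  -- peeling: independence product over the plants
  have hGdisj : ∀ (j0 : Fin b) (t : Finset (Fin b)), j0 ∉ t →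
      Disjoint (G j0) (⋃ j' ∈ t, G j') := by
    intro j0 t hj0
    rw [Set.disjoint_left]
    intro i hi0 hiU
    simp only [Set.mem_iUnion] at hiU
    obtain ⟨j', hj', hi'⟩ := hiU
    simp only [hG, Set.mem_preimage, Set.mem_singleton_iff] at hi0 hi'
    rw [hi0] at hi'
    obtain rfl : j0 = j' := by simpa using hi'
    exact hj0 hj'
  have hpeel : ∀ t : Finset (Fin b),
      μ (⋂ j' ∈ t, (E j')ᶜ) = ∏ j' ∈ t, μ ((E j')ᶜ) := by
    intro t
    induction t using Finset.induction_on with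
    | empty => simp
    | @insert j0 t hj0 ih =>
      rw [Finset.set_biInter_insert, Finset.prod_insert hj0, ← ih]
      refine hfac (G j0) (⋃ j' ∈ t, G j') (hGdisj j0 t hj0) _ _ (hmE j0).compl ?_
      refine Finset.measurableSet_biInter _ ?_
      intro j' hj'
      have hsub : G j' ⊆ ⋃ j'' ∈ t, G j'' :=
        Set.subset_iUnion₂ (s := fun j'' (_ : j'' ∈ t) => G j'') j' hj'
      have hle2 : sup (G j') ≤ sup (⋃ j'' ∈ t, G j'') := sup_mono hsub
      exact (measLe' hle2 (hmE j')).compl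
  -- product formula for the API suppliers
  have hAc : μ (⋂ i' ∈ (Finset.univ : Finset (Fin a)), (A i')ᶜ)
      = ∏ i' : Fin a, μ ((A i')ᶜ) := by
    have h := hind.meas_biInter (S := Finset.univ.image Sum.inl)
      (s := fun i => (F i)ᶜ)
      (fun i _ => by
        rw [hmdef]
        exact (measurableSet_generateFrom (Set.mem_singleton _)).compl)
    rw [Finset.set_biInter_finset_image,
      Finset.prod_image (by intro x _ y _ hxy; exact Sum.inl_injective hxy)] at h
    simpa [hFdef] using h
  -- product formula for one plant with its lines
  have hPL' : ∀ j', μ (P j' ∩ ⋂ k' ∈ KSf j', (L j' k')ᶜ)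
      = μ (P j') * ∏ k' ∈ KSf j', μ ((L j' k')ᶜ) := by
    intro j'
    set s6 : (Fin a ⊕ (Fin b ⊕ Fin b × Fin c)) → Set Ω :=
      Sum.elim A (Sum.elim P fun jk => (L jk.1 jk.2)ᶜ) with hs6
    have hs6m : ∀ i, MeasurableSet[m i] (s6 i) := by
      rintro (i | j'' | ⟨j'', k''⟩) <;>
        simp only [hmdef, hs6, hFdef, Sum.elim_inl, Sum.elim_inr]
      · exact measurableSet_generateFrom (Set.mem_singleton _)
      · exact measurableSet_generateFrom (Set.mem_singleton _)
      · exact (measurableSet_generateFrom (Set.mem_singleton _)).compl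
    have hnotmem : (Sum.inr (Sum.inl j') : Fin a ⊕ (Fin b ⊕ Fin b × Fin c)) ∉
        (KSf j').image (fun k' => (Sum.inr (Sum.inr (j', k')) :
          Fin a ⊕ (Fin b ⊕ Fin b × Fin c))) := by
      simp
    have h := hind.meas_biInter
      (S := insert (Sum.inr (Sum.inl j'))
        ((KSf j').image fun k' => Sum.inr (Sum.inr (j', k'))))
      (s := s6) (fun i _ => hs6m i)
    rw [Finset.set_biInter_insert, Finset.set_biInter_finset_image,
      Finset.prod_insert hnotmem,
      Finset.prod_image (by intro x _ y _ hxy; simpa using hxy)] at h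
    simpa [hs6] using h
  have hEc_eq : ∀ j', (E j')ᶜ = (P j')ᶜ ∪ (P j' ∩ ⋂ k' ∈ KSf j', (L j' k')ᶜ) := by
    intro j'
    have : E j' = P j' ∩ ⋃ k' ∈ KSf j', L j' k' := rfl
    rw [this]
    ext x
    simp only [Set.mem_compl_iff, Set.mem_inter_iff, Set.mem_union, Set.mem_iUnion,
      Set.mem_iInter, not_and, not_exists, exists_prop]
    by_cases hx : x ∈ P j' <;> simp [hx]
  have hEc : ∀ j', μ ((E j')ᶜ)
      = μ ((P j')ᶜ) + μ (P j') * ∏ k' ∈ KSf j', μ ((L j' k')ᶜ) := by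
    intro j'
    have hd : Disjoint ((P j')ᶜ) (P j' ∩ ⋂ k' ∈ KSf j', (L j' k')ᶜ) :=
      disjoint_compl_left.mono_right Set.inter_subset_left
    have hm2 : MeasurableSet (P j' ∩ ⋂ k' ∈ KSf j', (L j' k')ᶜ) :=
      (hmP j').inter (Finset.measurableSet_biInter _ fun k' _ => (hmL j' k').compl)
    rw [hEc_eq j', measure_union hd hm2, hPL' j']
  -- toReal helpers
  have hone : ∀ s : Set Ω, MeasurableSet s → (μ sᶜ).toReal = 1 - (μ s).toReal := by
    intro s hs
    rw [prob_compl_eq_one_sub hs,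
      ENNReal.toReal_sub_of_le prob_le_one ENNReal.one_ne_top, ENNReal.toReal_one]
  have hEcR : ∀ j', (μ ((E j')ᶜ)).toReal = (1 - pP) + pP * (1 - pL) ^ (KSf j').card := by
    intro j'
    have hprodne : (∏ k' ∈ KSf j', μ ((L j' k')ᶜ)) ≠ ∞ :=
      ENNReal.prod_ne_top fun k' _ => measure_ne_top μ _
    rw [hEc j', ENNReal.toReal_add (measure_ne_top _ _)
        (ENNReal.mul_ne_top (measure_ne_top _ _) hprodne),
      ENNReal.toReal_mul, ENNReal.toReal_prod, hone _ (hmP j'), hPP j',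
      Finset.prod_congr rfl (fun k' _ => by rw [hone _ (hmL j' k'), hPL j' k']),
      Finset.prod_const]
  have hcard_j : (KSf j).card = c - 1 := by
    simp [hKS, Finset.card_erase_of_mem]
  have hcard_ne : ∀ j', j' ≠ j → (KSf j').card = c := by
    intro j' h; simp [hKS, h]
  have hEc_meas : ∀ j', MeasurableSet (E j') := fun j' =>
    (hmP j').inter (Finset.measurableSet_biUnion _ fun k' _ => hmL j' k')
  have hIcapR : (μ (⋂ j' ∈ (Finset.univ : Finset (Fin b)), (E j')ᶜ)).toReal
      = ((1 - pP) + pP * (1 - pL) ^ (c - 1)) *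
        ((1 - pP) + pP * (1 - pL) ^ c) ^ (b - 1) := by
    rw [hpeel, ENNReal.toReal_prod,
      ← Finset.mul_prod_erase Finset.univ _ (Finset.mem_univ j), hEcR j, hcard_j]
    congr 1
    rw [Finset.prod_congr rfl
        (fun j' hj' => by rw [hEcR j', hcard_ne j' (Finset.ne_of_mem_erase hj')]),
      Finset.prod_const, Finset.card_erase_of_mem (Finset.mem_univ j),
      Finset.card_univ, Fintype.card_fin]
  have hVR : (μ (⋃ j', E j')).toReal
      = 1 - ((1 - pP) + pP * (1 - pL) ^ (c - 1)) *
        ((1 - pP) + pP * (1 - pL) ^ c) ^ (b - 1) := by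
    have hco : (⋃ j', E j')
        = (⋂ j' ∈ (Finset.univ : Finset (Fin b)), (E j')ᶜ)ᶜ := by
      ext x; simp
    rw [hco, hone _ (Finset.measurableSet_biInter _ fun j' _ => (hEc_meas j').compl), hIcapR]
  have hUR : (μ (⋃ i', A i')).toReal = 1 - (1 - pA) ^ a := by
    have hco : (⋃ i', A i')
        = (⋂ i' ∈ (Finset.univ : Finset (Fin a)), (A i')ᶜ)ᶜ := by
      ext x; simp
    rw [hco, hone _ (Finset.measurableSet_biInter _ fun i' _ => (hmA i').compl),
      hAc, ENNReal.toReal_prod,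
      Finset.prod_congr rfl (fun i' _ => by rw [hone _ (hmA i'), hPA i']),
      Finset.prod_const, Finset.card_univ, Fintype.card_fin]
  have htR : (μ ((L j k)ᶜ)).toReal = 1 - pL := by rw [hone _ (hmL j k), hPL j k]
  have htne : μ ((L j k)ᶜ) ≠ 0 := by
    intro h0; rw [h0] at htR; simp at htR; linarith
  have htfin : μ ((L j k)ᶜ) ≠ ∞ := measure_ne_top _ _
  -- the key set identity
  have hstep1 : (L j k)ᶜ ∩ ((⋃ i, A i) ∩ ⋃ j'', P j'' ∩ ⋃ k'', L j'' k'')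
      = (⋃ i, A i) ∩ ((L j k)ᶜ ∩ ⋃ j', E j') := by
    ext x
    simp only [Set.mem_inter_iff, Set.mem_compl_iff, Set.mem_iUnion, hE, exists_prop]
    constructor
    · rintro ⟨hnl, hA', j'', hP, k'', hLx⟩
      refine ⟨hA', hnl, j'', hP, k'', ?_, hLx⟩
      by_cases hj : j'' = j
      · subst hj
        simp only [hKS, if_pos rfl, Finset.mem_erase, Finset.mem_univ, and_true]
        intro hkk; rw [hkk] at hLx; exact hnl hLx
      · simp [hKS, hj]
    · rintro ⟨hA', hnl, j', hP, k', hk', hLx⟩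
      exact ⟨hnl, hA', j', hP, k', hLx⟩
  -- factorization
  have hmemA : ∀ i' : Fin a,
      (Sum.inl i' : Fin a ⊕ (Fin b ⊕ Fin b × Fin c)) ∈ g ⁻¹' {none} := by
    intro i'; simp [hgdef]
  have hmeasU : MeasurableSet[sup (g ⁻¹' {none})] (⋃ i', A i') :=
    MeasurableSet.iUnion fun i' => memF (hmemA i')
  have hmeasRest : MeasurableSet[sup ((g ⁻¹' {none})ᶜ)] ((L j k)ᶜ ∩ ⋃ j', E j') := by
    refine MeasurableSet.inter ?_ ?_
    · refine (memF (i := Sum.inr (Sum.inr (j, k))) ?_).compl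
      show g (Sum.inr (Sum.inr (j, k))) ∈ ({none}ᶜ : Set (Option (Option (Fin b))))
      simp [hgdef]
    · refine MeasurableSet.iUnion fun j' => ?_
      refine measLe' (sup_mono ?_) (hmE j')
      intro i hi
      simp only [hG, Set.mem_preimage, Set.mem_singleton_iff] at hi
      simp [hi]
  have hmeast : MeasurableSet[sup (g ⁻¹' {some none})] ((L j k)ᶜ) := by
    refine (memF (i := Sum.inr (Sum.inr (j, k))) ?_).compl
    show g (Sum.inr (Sum.inr (j, k))) ∈ ({some none} : Set (Option (Option (Fin b))))
    simp [hgdef]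
  have hmeasV : MeasurableSet[sup ((g ⁻¹' {some none})ᶜ)] (⋃ j', E j') := by
    refine MeasurableSet.iUnion fun j' => ?_
    refine measLe' (sup_mono ?_) (hmE j')
    intro i hi
    simp only [hG, Set.mem_preimage, Set.mem_singleton_iff] at hi
    simp [hi]
  have hmain : μ ((L j k)ᶜ ∩ ((⋃ i, A i) ∩ ⋃ j'', P j'' ∩ ⋃ k'', L j'' k''))
      = μ (⋃ i', A i') * (μ ((L j k)ᶜ) * μ (⋃ j', E j')) := by
    rw [hstep1, hfac _ _ disjoint_compl_right _ _ hmeasU hmeasRest,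
      hfac _ _ disjoint_compl_right _ _ hmeast hmeasV]
  rw [cond_apply (hmL j k).compl, hmain]
  have hcancel : (μ ((L j k)ᶜ))⁻¹ * (μ (⋃ i', A i') * (μ ((L j k)ᶜ) * μ (⋃ j', E j')))
      = μ (⋃ i', A i') * μ (⋃ j', E j') := by
    rw [show (μ ((L j k)ᶜ))⁻¹ * (μ (⋃ i', A i') * (μ ((L j k)ᶜ) * μ (⋃ j', E j')))
        = ((μ ((L j k)ᶜ))⁻¹ * μ ((L j k)ᶜ)) * (μ (⋃ i', A i') * μ (⋃ j', E j')) by ring,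
      ENNReal.inv_mul_cancel htne htfin, one_mul]
  rw [hcancel, ENNReal.toReal_mul, hUR, hVR]
  ring
end

section
/- If 0 < pL < 1, then for any fixed line indices (j,k) the probability that the failure of that line causes a system failure, namely P(S | L_{j,k}) - P(S | L_{j,k}ᶜ), equals r^API·pP·(1-pL)^{c-1}·Q^{b-1}, where Q = (1-pP)+pP·(1-pL)^c. (Paper equation (9)/(A23): Birnbaum importance of a manufacturing line.) -/
/-!
Since the line event `L j k` is independent of all other events, conditioning on it being up
(resp. down) amounts to replacing it by `univ` (resp. `∅`) in the system event. Grouping the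
events into independent blocks (the suppliers, and each plant with its lines) shows that such a
series–parallel system works with probability
`r^API * (1 - ∏ j, (1 - pP * (1 - ∏ k, (1 - P(line j k)))))`. The two substitutions change only
the factor of plant `j`, and the difference of the two values is the claimed formula.
-/

open MeasureTheory ProbabilityTheory MeasurableSpace

namespace ProbabilityTheory

variable {Ω ι κ : Type*} {mΩ : MeasurableSpace Ω} {μ : Measure Ω}

theorem iIndepSet.iIndep_generateFrom_fiber {f : ι → Set Ω} (hm : ∀ i, MeasurableSet (f i))
    (hf : iIndepSet f μ) (π : ι → κ) :
    iIndep (fun k => generateFrom (f '' (π ⁻¹' {k}))) μ := by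
  classical
  have := hf.isProbabilityMeasure
  rw [iIndep_iff]
  intro s
  induction s using Finset.induction with
  | empty => simp
  | insert k s hk ih =>
    intro X hX
    rw [Finset.set_biInter_insert, Finset.prod_insert hk,
      ← ih fun i hi => hX i (Finset.mem_insert_of_mem hi)]
    have hdisj : Disjoint (π ⁻¹' {k}) (π ⁻¹' s) :=
      Disjoint.preimage π (Set.disjoint_singleton_left.2 hk)
    refine (Indep_iff _ _ _).1 (hf.indep_generateFrom_of_disjoint hm _ _ hdisj) _ _
      (hX k (Finset.mem_insert_self k s)) ?_
    refine MeasurableSet.biInter s.countable_toSet fun i hi => ?_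
    refine generateFrom_mono (Set.image_mono (Set.preimage_mono ?_)) _
      (hX i (Finset.mem_insert_of_mem hi))
    simpa using hi

theorem iIndepSet.indep_generateFrom_singleton_compl {f : ι → Set Ω}
    (hm : ∀ i, MeasurableSet (f i)) (hf : iIndepSet f μ) (i : ι) :
    Indep (generateFrom {f i}) (generateFrom (f '' {i}ᶜ)) μ := by
  rw [← Set.image_singleton]
  exact hf.indep_generateFrom_of_disjoint hm {i} {i}ᶜ disjoint_compl_right

variable {m : ι → MeasurableSpace Ω} {E : ι → Set Ω}

theorem iIndep.measureReal_iInter_compl [Fintype ι] (h : iIndep m μ) (hle : ∀ i, m i ≤ mΩ)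
    (hE : ∀ i, MeasurableSet[m i] (E i)) :
    μ.real (⋂ i, (E i)ᶜ) = ∏ i, (1 - μ.real (E i)) := by
  have := h.isProbabilityMeasure
  rw [measureReal_def, h.meas_iInter fun i => (hE i).compl, ENNReal.toReal_prod]
  exact Finset.prod_congr rfl fun i _ => probReal_compl_eq_one_sub (hle i _ (hE i))

theorem iIndep.measureReal_iUnion [Fintype ι] (h : iIndep m μ) (hle : ∀ i, m i ≤ mΩ)
    (hE : ∀ i, MeasurableSet[m i] (E i)) :
    μ.real (⋃ i, E i) = 1 - ∏ i, (1 - μ.real (E i)) := by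
  have := h.isProbabilityMeasure
  rw [← h.measureReal_iInter_compl hle hE, ← Set.compl_iUnion,
    probReal_compl_eq_one_sub (MeasurableSet.iUnion fun i => hle i _ (hE i)), sub_sub_cancel]

theorem iIndep.measureReal_inter_iUnion [Fintype κ] {m : Option κ → MeasurableSpace Ω}
    (h : iIndep m μ) (hle : ∀ o, m o ≤ mΩ) {E₀ : Set Ω} {E : κ → Set Ω}
    (hE₀ : MeasurableSet[m none] E₀) (hE : ∀ i, MeasurableSet[m (some i)] (E i)) :
    μ.real (E₀ ∩ ⋃ i, E i) = μ.real E₀ * (1 - ∏ i, (1 - μ.real (E i))) := by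
  have := h.isProbabilityMeasure
  have hfail : μ.real (E₀ \ ⋃ i, E i) = μ.real E₀ * ∏ i, (1 - μ.real (E i)) := by
    have hZ : ∀ o, MeasurableSet[m o] (o.elim E₀ fun i => (E i)ᶜ) := by
      rintro (_ | i)
      exacts [hE₀, (hE i).compl]
    have hset : E₀ \ ⋃ i, E i = ⋂ o : Option κ, o.elim E₀ fun i => (E i)ᶜ := by
      rw [Set.iInter_option, Set.sdiff_eq, Set.compl_iUnion]; rfl
    rw [hset, measureReal_def, h.meas_iInter hZ, ENNReal.toReal_prod, Fintype.prod_option]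
    exact congrArg _ (Finset.prod_congr rfl fun i _ =>
      probReal_compl_eq_one_sub (hle _ _ (hE i)))
  have hsplit := measureReal_inter_add_sdiff (μ := μ) (s := E₀)
    (MeasurableSet.iUnion fun i => hle _ _ (hE i))
  rw [hfail] at hsplit
  linear_combination hsplit

theorem cond_eq_of_indep_of_inter_eq [IsFiniteMeasure μ] {m₁ m₂ : MeasurableSpace Ω}
    (hind : Indep m₁ m₂ μ) {X Y S : Set Ω} (hXm : MeasurableSet[mΩ] X) (hX : MeasurableSet[m₁] X)
    (hY : MeasurableSet[m₂] Y) (hX0 : μ X ≠ 0) (hXS : X ∩ S = X ∩ Y) : μ[S | X] = μ Y := by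
  rw [cond_apply hXm, hXS, (Indep_iff _ _ _).1 hind X Y hX hY,
    ← mul_assoc, ENNReal.inv_mul_cancel hX0 (measure_ne_top μ X), one_mul]

end ProbabilityTheory

theorem Fintype.prod_eq_mul_pow_of_ne {M ι : Type*} [CommMonoid M] [Fintype ι] [DecidableEq ι]
    {f : ι → M} (i : ι) {y : M} (hf : ∀ j ≠ i, f j = y) :
    ∏ j, f j = f i * y ^ (Fintype.card ι - 1) := by
  rw [Fintype.prod_eq_mul_prod_compl i, Finset.prod_congr rfl fun j hj => hf j (by simpa using hj),
    Finset.prod_const, Finset.card_compl, Finset.card_singleton]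

section SupplyChain

variable {Ω : Type*} [MeasurableSpace Ω] {μ : Measure Ω} {a b c : ℕ}
  (A : Fin a → Set Ω) (P : Fin b → Set Ω) (L : Fin b → Fin c → Set Ω)

def supplyEvents : Fin a ⊕ (Fin b ⊕ Fin b × Fin c) → Set Ω :=
  Sum.elim A (Sum.elim P fun jk => L jk.1 jk.2)

def plantIndex : Fin a ⊕ (Fin b ⊕ Fin b × Fin c) → Option (Fin b) :=
  Sum.elim (fun _ => none) (Sum.elim some fun jk => some jk.1)

def plantWorks (L : Fin b → Fin c → Set Ω) (j : Fin b) : Set Ω :=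
  P j ∩ ⋃ k, L j k

def systemWorks (L : Fin b → Fin c → Set Ω) : Set Ω :=
  (⋃ i, A i) ∩ ⋃ j, plantWorks P L j

def updateLine (j : Fin b) (k : Fin c) (x : Set Ω) : Fin b → Fin c → Set Ω :=
  fun j' k' => if j' = j ∧ k' = k then x else L j' k'

variable {A P L}

theorem measurableSet_supplyEvents (hmA : ∀ i, MeasurableSet (A i))
    (hmP : ∀ j, MeasurableSet (P j)) (hmL : ∀ j k, MeasurableSet (L j k)) :
    ∀ i, MeasurableSet (supplyEvents A P L i) := by
  rintro (i | j | ⟨j, k⟩)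
  exacts [hmA i, hmP j, hmL j k]

variable (hm : ∀ i, MeasurableSet (supplyEvents A P L i))
  (hindep : iIndepSet (supplyEvents A P L) μ)
include hm hindep

theorem measureReal_plantWorks {pP : ℝ} (hPP : ∀ j, μ.real (P j) = pP)
    {L' : Fin b → Fin c → Set Ω} (hL' : ∀ j k, MeasurableSet[generateFrom {L j k}] (L' j k))
    (j : Fin b) :
    μ.real (plantWorks P L' j) = pP * (1 - ∏ k, (1 - μ.real (L' j k))) := by
  let plantAndLines : Option (Fin c) → Fin a ⊕ (Fin b ⊕ Fin b × Fin c) :=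
    fun o => o.elim (.inr (.inl j)) fun k => .inr (.inr (j, k))
  have hinj : plantAndLines.Injective := by
    rintro (_ | k) (_ | k') h <;> simp_all [plantAndLines]
  have hsub := (iIndepSet_iff_iIndep _ _).1 (hindep.precomp (g := plantAndLines) hinj)
  rw [← hPP j]
  exact hsub.measureReal_inter_iUnion (fun o => generateFrom_le fun _ h => h ▸ hm _)
    (measurableSet_generateFrom rfl) (hL' j)

theorem measureReal_systemWorks {pA pP : ℝ} (hPA : ∀ i, μ.real (A i) = pA)
    (hPP : ∀ j, μ.real (P j) = pP) {L' : Fin b → Fin c → Set Ω}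
    (hL' : ∀ j k, MeasurableSet[generateFrom {L j k}] (L' j k)) :
    μ.real (systemWorks A P L') =
      (1 - (1 - pA) ^ a) * (1 - ∏ j, (1 - pP * (1 - ∏ k, (1 - μ.real (L' j k))))) := by
  have hblocks := hindep.iIndep_generateFrom_fiber hm plantIndex
  have hmem : ∀ i, supplyEvents A P L i ∈ supplyEvents A P L '' (plantIndex ⁻¹' {plantIndex i}) :=
    fun i => ⟨i, rfl, rfl⟩
  have hgen := fun i => measurableSet_generateFrom (hmem i)
  have hA : iIndep (fun i => generateFrom {A i}) μ :=
    (iIndepSet_iff_iIndep _ _).1 (hindep.precomp (g := Sum.inl) Sum.inl_injective)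
  have hAworks : μ.real (⋃ i, A i) = 1 - (1 - pA) ^ a := by
    rw [hA.measureReal_iUnion (fun i => generateFrom_le fun _ h => h ▸ hm (.inl i))
      fun i => measurableSet_generateFrom rfl]
    simp [hPA]
  have hle : ∀ o, generateFrom (supplyEvents A P L '' (plantIndex ⁻¹' {o})) ≤ ‹_› :=
    fun o => generateFrom_le fun _ ⟨i, _, hi⟩ => hi ▸ hm i
  have hplant : ∀ j, MeasurableSet[generateFrom (supplyEvents A P L '' (plantIndex ⁻¹' {some j}))]
      (plantWorks P L' j) := fun j =>
    (hgen (.inr (.inl j))).inter <| .iUnion fun k =>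
      generateFrom_mono (Set.singleton_subset_iff.2 (hmem (.inr (.inr (j, k))))) _ (hL' j k)
  have hAev : MeasurableSet[generateFrom (supplyEvents A P L '' (plantIndex ⁻¹' {none}))]
      (⋃ i, A i) := .iUnion fun i => hgen (.inl i)
  rw [systemWorks, hblocks.measureReal_inter_iUnion hle hAev hplant, hAworks]
  simp_rw [measureReal_plantWorks hm hindep hPP hL']

theorem measureReal_systemWorks_updateLine {pA pP pL : ℝ} (hPA : ∀ i, μ.real (A i) = pA)
    (hPP : ∀ j, μ.real (P j) = pP) (hPL : ∀ j k, μ.real (L j k) = pL) (j : Fin b) (k : Fin c)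
    {x : Set Ω} (hx : MeasurableSet[generateFrom {L j k}] x) :
    μ.real (systemWorks A P (updateLine L j k x)) =
      (1 - (1 - pA) ^ a) * (1 - (1 - pP * (1 - (1 - μ.real x) * (1 - pL) ^ (c - 1))) *
        ((1 - pP) + pP * (1 - pL) ^ c) ^ (b - 1)) := by
  have hL' : ∀ j' k', MeasurableSet[generateFrom {L j' k'}] (updateLine L j k x j' k') := by
    intro j' k'
    by_cases h : j' = j ∧ k' = k
    · obtain ⟨rfl, rfl⟩ := h
      simpa [updateLine] using hx
    · simpa [updateLine, h] using measurableSet_generateFrom (Set.mem_singleton (L j' k'))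
  have hline : ∀ k' ≠ k, 1 - μ.real (updateLine L j k x j k') = 1 - pL := by
    intro k' hk'
    simp [updateLine, hk', hPL]
  have hplant : ∀ j' ≠ j, 1 - pP * (1 - ∏ k', (1 - μ.real (updateLine L j k x j' k'))) =
      (1 - pP) + pP * (1 - pL) ^ c := by
    intro j' hj'
    simp only [updateLine, hj', false_and, ↓reduceIte, hPL, Finset.prod_const, Finset.card_univ,
      Fintype.card_fin]
    ring
  rw [measureReal_systemWorks hm hindep hPA hPP hL', Fintype.prod_eq_mul_pow_of_ne j hplant,
    Fintype.prod_eq_mul_pow_of_ne k hline]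
  simp [updateLine]

theorem cond_systemWorks_eq_updateLine (j : Fin b) (k : Fin c) {X x : Set Ω}
    (hXm : MeasurableSet X) (hX : MeasurableSet[generateFrom {L j k}] X) (hX0 : μ X ≠ 0)
    (hx : MeasurableSet[generateFrom (supplyEvents A P L '' {.inr (.inr (j, k))}ᶜ)] x)
    (hXx : X ∩ L j k = X ∩ x) :
    μ[systemWorks A P L | X] = μ (systemWorks A P (updateLine L j k x)) := by
  have hgen : ∀ i ≠ .inr (.inr (j, k)),
      MeasurableSet[generateFrom (supplyEvents A P L '' {.inr (.inr (j, k))}ᶜ)]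
        (supplyEvents A P L i) :=
    fun i hi => measurableSet_generateFrom ⟨i, hi, rfl⟩
  have hline : ∀ j' k', MeasurableSet[generateFrom (supplyEvents A P L '' {.inr (.inr (j, k))}ᶜ)]
      (updateLine L j k x j' k') := by
    intro j' k'
    by_cases h : j' = j ∧ k' = k
    · simpa [updateLine, h] using hx
    · rw [updateLine, if_neg h]
      exact hgen (.inr (.inr (j', k'))) (by simpa using h)
  have hsys : MeasurableSet[generateFrom (supplyEvents A P L '' {.inr (.inr (j, k))}ᶜ)]
      (systemWorks A P (updateLine L j k x)) :=
    (MeasurableSet.iUnion fun i => hgen (.inl i) (by simp)).inter <| .iUnion fun j' =>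
      (hgen (.inr (.inl j')) (by simp)).inter (.iUnion (hline j'))
  have := hindep.isProbabilityMeasure
  refine cond_eq_of_indep_of_inter_eq
    (hindep.indep_generateFrom_singleton_compl hm (.inr (.inr (j, k)))) hXm hX hsys hX0 ?_
  ext ω
  simp only [Set.mem_inter_iff, and_congr_right_iff]
  intro hω
  have hiff : ∀ j' k', ω ∈ L j' k' ↔ ω ∈ updateLine L j k x j' k' := by
    intro j' k'
    by_cases h : j' = j ∧ k' = k
    · obtain ⟨rfl, rfl⟩ := h
      simpa [updateLine, hω] using congrArg (ω ∈ ·) hXx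
    · simp [updateLine, h]
  simp only [systemWorks, plantWorks, Set.mem_inter_iff, Set.mem_iUnion, hiff]

end SupplyChain

theorem stmt_10_general
    {Ω : Type*} [MeasurableSpace Ω] (μ : Measure Ω) [IsProbabilityMeasure μ]
    (pA pP pL : ℝ)
    (a b c : ℕ)
    (A : Fin a → Set Ω) (P : Fin b → Set Ω) (L : Fin b → Fin c → Set Ω)
    (hmA : ∀ i, MeasurableSet (A i)) (hmP : ∀ j, MeasurableSet (P j))
    (hmL : ∀ j k, MeasurableSet (L j k))
    (hindep : iIndepSet
      (Sum.elim A (Sum.elim P (fun jk : Fin b × Fin c => L jk.1 jk.2))) μ)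
    (hPA : ∀ i, (μ (A i)).toReal = pA)
    (hPP : ∀ j, (μ (P j)).toReal = pP)
    (hPL : ∀ j k, (μ (L j k)).toReal = pL)
    (hpLpos : 0 < pL) (hpLlt : pL < 1) (j : Fin b) (k : Fin c) :
    (μ[|L j k] ((⋃ i, A i) ∩ ⋃ j, P j ∩ ⋃ k, L j k)).toReal - (μ[|(L j k)ᶜ] ((⋃ i, A i) ∩ ⋃ j, P j ∩ ⋃ k, L j k)).toReal
        = (1 - (1 - pA) ^ a) * pP * (1 - pL) ^ (c - 1) *
          ((1 - pP) + pP * (1 - pL) ^ c) ^ (b - 1) := by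
  have hm := measurableSet_supplyEvents hmA hmP hmL
  have hL0 : μ (L j k) ≠ 0 := fun h =>
    hpLpos.ne' (by rw [← hPL j k, h, ENNReal.toReal_zero])
  have hLc0 : μ (L j k)ᶜ ≠ 0 := fun h => (sub_pos.2 hpLlt).ne' <| by
    rw [← hPL j k, ← measureReal_def, ← probReal_compl_eq_one_sub (hmL j k), measureReal_def, h,
      ENNReal.toReal_zero]
  rw [show (⋃ i, A i) ∩ ⋃ j, P j ∩ ⋃ k, L j k = systemWorks A P L from rfl,
    cond_systemWorks_eq_updateLine hm hindep j k (hmL j k) (measurableSet_generateFrom rfl) hL0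
      MeasurableSet.univ (by simp),
    cond_systemWorks_eq_updateLine hm hindep j k (hmL j k).compl
      (measurableSet_generateFrom (Set.mem_singleton _)).compl hLc0
      (@MeasurableSet.empty Ω (generateFrom _)) (by simp)]
  simp only [← measureReal_def]
  rw [measureReal_systemWorks_updateLine hm hindep hPA hPP hPL j k MeasurableSet.univ,
    measureReal_systemWorks_updateLine hm hindep hPA hPP hPL j k
      (@MeasurableSet.empty Ω (generateFrom _))]
  simp only [probReal_univ, sub_self, zero_mul, sub_zero, mul_one, measureReal_empty, one_mul]
  ring

theorem stmt_10
    {Ω : Type*} [MeasurableSpace Ω] (μ : Measure Ω) [IsProbabilityMeasure μ]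
    (pA pP pL : ℝ)
    (hpA0 : 0 ≤ pA) (hpA1 : pA ≤ 1) (hpP0 : 0 ≤ pP) (hpP1 : pP ≤ 1)
    (hpL0 : 0 ≤ pL) (hpL1 : pL ≤ 1)
    (a b c : ℕ) (ha : 0 < a) (hb : 0 < b) (hc : 0 < c)
    (A : Fin a → Set Ω) (P : Fin b → Set Ω) (L : Fin b → Fin c → Set Ω)
    (hmA : ∀ i, MeasurableSet (A i)) (hmP : ∀ j, MeasurableSet (P j))
    (hmL : ∀ j k, MeasurableSet (L j k))
    (hindep : iIndepSet
      (Sum.elim A (Sum.elim P (fun jk : Fin b × Fin c => L jk.1 jk.2))) μ)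
    (hPA : ∀ i, (μ (A i)).toReal = pA)
    (hPP : ∀ j, (μ (P j)).toReal = pP)
    (hPL : ∀ j k, (μ (L j k)).toReal = pL)
    (hpLpos : 0 < pL) (hpLlt : pL < 1) (j : Fin b) (k : Fin c) :
    (μ[|L j k] ((⋃ i, A i) ∩ ⋃ j, P j ∩ ⋃ k, L j k)).toReal - (μ[|(L j k)ᶜ] ((⋃ i, A i) ∩ ⋃ j, P j ∩ ⋃ k, L j k)).toReal
        = (1 - (1 - pA) ^ a) * pP * (1 - pL) ^ (c - 1) *
          ((1 - pP) + pP * (1 - pL) ^ c) ^ (b - 1) :=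
  stmt_10_general μ pA pP pL a b c A P L hmA hmP hmL hindep hPA hPP hPL hpLpos hpLlt j k
end

section
/- For pA ∈ (0,1), pP, pL ∈ (0,1] and positive integers b, c, the marginal reduction in expected shortage from adding a supplier satisfies s(a) - s(a+1) = r^PL·pA·(1-pA)^a, where s(a) = 1 - R(pA,pP,pL;a,b,c) and r^PL = 1 - Q(pP,pL,c)^b; in particular this marginal reduction is strictly decreasing in a. (Paper Section 4.2: the relative benefit of adding the first back-up supplier exceeds that of adding a second back-up.) -/
noncomputable def Qfun (pP pL : ℝ) (c : ℕ) : ℝ := (1 - pP) + pP * (1 - pL) ^ c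

noncomputable def Rfun (pA pP pL : ℝ) (a b c : ℕ) : ℝ :=
  (1 - (1 - pA) ^ a) * (1 - Qfun pP pL c ^ b)

theorem stmt_15 (pA pP pL : ℝ) (hpA : pA ∈ Set.Ioo (0:ℝ) 1)
    (hpP : pP ∈ Set.Ioc (0:ℝ) 1) (hpL : pL ∈ Set.Ioc (0:ℝ) 1)
    (b c : ℕ) (hb : 0 < b) (hc : 0 < c) :
    (∀ a : ℕ, 0 < a →
      (1 - Rfun pA pP pL a b c) - (1 - Rfun pA pP pL (a + 1) b c)
        = (1 - Qfun pP pL c ^ b) * pA * (1 - pA) ^ a) ∧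
    (∀ a a' : ℕ, 0 < a → a < a' →
      (1 - Rfun pA pP pL a' b c) - (1 - Rfun pA pP pL (a' + 1) b c)
        < (1 - Rfun pA pP pL a b c) - (1 - Rfun pA pP pL (a + 1) b c)) := by
  obtain ⟨hpA0, hpA1⟩ := hpA
  obtain ⟨hpP0, hpP1⟩ := hpP
  obtain ⟨hpL0, hpL1⟩ := hpL
  have heq : ∀ a : ℕ,
      (1 - Rfun pA pP pL a b c) - (1 - Rfun pA pP pL (a + 1) b c)
        = (1 - Qfun pP pL c ^ b) * pA * (1 - pA) ^ a := by
    intro a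
    simp only [Rfun, pow_succ]
    ring
  refine ⟨fun a _ => heq a, fun a a' ha haa => ?_⟩
  rw [heq a, heq a']
  have hQ0 : 0 ≤ Qfun pP pL c := by
    have h1 : 0 ≤ (1 - pL) ^ c := pow_nonneg (by linarith) c
    have : 0 ≤ pP * (1 - pL) ^ c := mul_nonneg (le_of_lt hpP0) h1
    unfold Qfun; linarith
  have hQ1 : Qfun pP pL c < 1 := by
    have h1 : (1 - pL) ^ c < 1 := by
      apply pow_lt_one₀ (by linarith) (by linarith) hc.ne'
    have : pP * (1 - pL) ^ c < pP * 1 := by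
      exact mul_lt_mul_of_pos_left h1 hpP0
    unfold Qfun; nlinarith
  have hfac : 0 < (1 - Qfun pP pL c ^ b) * pA := by
    have : Qfun pP pL c ^ b < 1 := pow_lt_one₀ hQ0 hQ1 hb.ne'
    have h2 : 0 < 1 - Qfun pP pL c ^ b := by linarith
    exact mul_pos h2 hpA0
  have hpow : (1 - pA) ^ a' < (1 - pA) ^ a :=
    pow_lt_pow_right_of_lt_one₀ (by linarith) (by linarith) haa
  calc (1 - Qfun pP pL c ^ b) * pA * (1 - pA) ^ a'
      < (1 - Qfun pP pL c ^ b) * pA * (1 - pA) ^ a :=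
        mul_lt_mul_of_pos_left hpow hfac
    _ = _ := rfl
end

section
/- For pA, pP, pL ∈ (0,1) and positive integers a, b, the marginal reduction in expected shortage from adding a line to each plant, namely s(c) - s(c+1) = r^API·(Q(pP,pL,c)^b - Q(pP,pL,c+1)^b) where s(c) = 1 - R(pA,pP,pL;a,b,c) and r^API = 1-(1-pA)^a, is nonincreasing in c: for all c ≥ 1, s(c) - s(c+1) ≥ s(c+1) - s(c+2). (Paper Section 4.2: diminishing marginal benefit of back-up lines.) -/
lemma pow_diff_convex (b : ℕ) {x y z : ℝ} (hz : 0 ≤ z) (hzy : z ≤ y) (hyx : y ≤ x)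
    (hmid : 2 * y ≤ x + z) : y ^ b - z ^ b ≤ x ^ b - y ^ b := by
  have hy : 0 ≤ y := hz.trans hzy
  have hx : 0 ≤ x := hy.trans hyx
  have hconv := (convexOn_pow b).2 (Set.mem_Ici.mpr hx) (Set.mem_Ici.mpr hz)
    (by norm_num : (0:ℝ) ≤ 1/2) (by norm_num : (0:ℝ) ≤ 1/2) (by norm_num)
  have h1 : y ^ b ≤ ((x + z)/2) ^ b :=
    pow_le_pow_left₀ hy (by linarith) b
  have h2 : ((x + z)/2 : ℝ) ^ b ≤ (x ^ b + z ^ b)/2 := by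
    have := hconv
    simp only [smul_eq_mul] at this
    calc ((x + z)/2 : ℝ) ^ b = (1/2 * x + 1/2 * z) ^ b := by ring_nf
    _ ≤ 1/2 * x ^ b + 1/2 * z ^ b := this
    _ = (x ^ b + z ^ b)/2 := by ring
  linarith

theorem stmt_17 (pA pP pL : ℝ) (hpA : pA ∈ Set.Ioo (0:ℝ) 1)
    (hpP : pP ∈ Set.Ioo (0:ℝ) 1) (hpL : pL ∈ Set.Ioo (0:ℝ) 1)
    (a b : ℕ) (ha : 0 < a) (hb : 0 < b) :
    (∀ c : ℕ, 0 < c →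
      (1 - Rfun pA pP pL a b c) - (1 - Rfun pA pP pL a b (c + 1))
        = (1 - (1 - pA) ^ a) * (Qfun pP pL c ^ b - Qfun pP pL (c + 1) ^ b)) ∧
    (∀ c : ℕ, 1 ≤ c →
      (1 - Rfun pA pP pL a b (c + 1)) - (1 - Rfun pA pP pL a b (c + 2))
        ≤ (1 - Rfun pA pP pL a b c) - (1 - Rfun pA pP pL a b (c + 1))) := by
  obtain ⟨hA0, hA1⟩ := hpA
  obtain ⟨hP0, hP1⟩ := hpP
  obtain ⟨hL0, hL1⟩ := hpL
  constructor
  · intro c _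
    simp only [Rfun]
    ring
  · intro c _
    have key : ∀ c : ℕ,
        (1 - Rfun pA pP pL a b c) - (1 - Rfun pA pP pL a b (c + 1))
          = (1 - (1 - pA) ^ a) * (Qfun pP pL c ^ b - Qfun pP pL (c + 1) ^ b) := by
      intro c; simp only [Rfun]; ring
    rw [key, key]
    have hrAPI : 0 ≤ 1 - (1 - pA) ^ a := by
      have : (1 - pA) ^ a ≤ 1 := pow_le_one₀ (by linarith) (by linarith)
      linarith
    apply mul_le_mul_of_nonneg_left _ hrAPI
    set t := 1 - pL with ht
    have ht0 : 0 ≤ t := by linarith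
    have ht1 : t ≤ 1 := by linarith
    have hQpos : ∀ n : ℕ, 0 ≤ Qfun pP pL n := by
      intro n
      have : 0 ≤ pP * t ^ n := mul_nonneg (by linarith) (pow_nonneg ht0 n)
      simp only [Qfun, ← ht]
      linarith
    have hmono : ∀ n : ℕ, Qfun pP pL (n + 1) ≤ Qfun pP pL n := by
      intro n
      simp only [Qfun, ← ht]
      have : t ^ (n + 1) ≤ t ^ n := pow_le_pow_of_le_one ht0 ht1 (by omega)
      nlinarith
    apply pow_diff_convex b (hQpos (c + 2)) (hmono (c + 1)) (hmono c)
    simp only [Qfun, ← ht]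
    have h1 : 2 * t ^ (c + 1) ≤ t ^ c + t ^ (c + 2) := by
      have h := mul_nonneg (pow_nonneg ht0 c) (sq_nonneg (1 - t))
      ring_nf
      nlinarith [pow_nonneg ht0 c]
    nlinarith
end
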